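/- arXiv:math/0406250 — 3 statements merged into one kernel-verified Lean document; each statement's English description precedes it below -/
import Mathlib

section
/- Let λ/μ be an edgewise connected skew diagram with d diagonals. Then the map sending an outside decomposition Π of λ/μ to its cutting strip φ(Π) is a bijection between the set of outside decompositions of λ/μ and the set of border strips with d boxes (considered up to translation). -/
noncomputable section

/-- A box in the plane: `(row, column)`, rows increasing downward (English notation). -/
abbrev Box : Type := ℤ × ℤ

/-- The content of a box `(i, j)` is `j - i`. -/
def boxContent (b : Box) : ℤ := b.2 - b.1

/-- An integer partition, indexed from `1` (the value `part 0` is irrelevant). -/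
structure Partition' where
  part : ℕ → ℕ
  antitone : ∀ ⦃i j : ℕ⦄, i ≤ j → part j ≤ part i
  eventually_zero : ∃ N : ℕ, ∀ i : ℕ, N ≤ i → part i = 0

/-- The skew diagram `λ/μ`: boxes `(i, j)` with `i ≥ 1` and `μ_i < j ≤ λ_i`. -/
def skewCells (lam mu : Partition') : Set Box :=
  {b : Box | 1 ≤ b.1 ∧ (mu.part b.1.toNat : ℤ) < b.2 ∧ b.2 ≤ (lam.part b.1.toNat : ℤ)}

/-- `D` is the set of boxes of a skew diagram `λ/μ` for some partitions `μ ⊆ λ`. -/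
def IsSkewShape (D : Set Box) : Prop :=
  ∃ lam mu : Partition', (∀ i, mu.part i ≤ lam.part i) ∧ D = skewCells lam mu

/-- Translate a set of boxes by a vector `v`. -/
def boxTranslate (v : Box) (D : Set Box) : Set Box := (fun b => b + v) '' D

/-- `D` is a translate of a skew diagram. -/
def IsSkewLike (D : Set Box) : Prop := ∃ v : Box, IsSkewShape (boxTranslate v D)

/-- Two boxes share a common edge. -/
def boxAdj (a b : Box) : Prop :=
  (a.1 = b.1 ∧ (a.2 = b.2 + 1 ∨ b.2 = a.2 + 1)) ∨
  (a.2 = b.2 ∧ (a.1 = b.1 + 1 ∨ b.1 = a.1 + 1))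

/-- Any two boxes of `D` are joined by a path of boxes of `D` in which consecutive
boxes share a common edge. -/
def EdgewiseConnected (D : Set Box) : Prop :=
  ∀ a ∈ D, ∀ b ∈ D, Relation.ReflTransGen (fun x y => x ∈ D ∧ y ∈ D ∧ boxAdj x y) a b

/-- `D` contains no `2 × 2` block of boxes. -/
def NoTwoByTwo (D : Set Box) : Prop :=
  ∀ b : Box, ¬(b ∈ D ∧ (b.1, b.2 + 1) ∈ D ∧ (b.1 + 1, b.2) ∈ D ∧ (b.1 + 1, b.2 + 1) ∈ D)

/-- A border strip (ribbon): a nonempty edgewise connected skew diagram (up to translation)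
containing no `2 × 2` block of boxes. -/
def IsBorderStrip (B : Set Box) : Prop :=
  B.Nonempty ∧ IsSkewLike B ∧ EdgewiseConnected B ∧ NoTwoByTwo B

/-- `b` is the starting box (lower-left end) of `B`: no box of `B` directly to its left
nor directly below it. -/
def IsStartBox (B : Set Box) (b : Box) : Prop :=
  b ∈ B ∧ (b.1, b.2 - 1) ∉ B ∧ (b.1 + 1, b.2) ∉ B

/-- `b` is the ending box (upper-right end) of `B`: no box of `B` directly above it
nor directly to its right. -/
def IsEndBox (B : Set Box) (b : Box) : Prop :=
  b ∈ B ∧ (b.1 - 1, b.2) ∉ B ∧ (b.1, b.2 + 1) ∉ B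

/-- The strip `B` has starting box of content `p` and ending box of content `q`. -/
def HasPQ (B : Set Box) (p q : ℤ) : Prop :=
  (∃ b : Box, IsStartBox B b ∧ boxContent b = p) ∧
  (∃ b : Box, IsEndBox B b ∧ boxContent b = q)

/-- An outside decomposition of `D`: a partition of the boxes of `D` into pairwise disjoint
border strips, each strip having its starting box on the left or bottom perimeter of `D` and
its ending box on the right or top perimeter of `D`. -/
def IsOutsideDecomposition (D : Set Box) (P : Set (Set Box)) : Prop :=
  (∀ θ ∈ P, IsBorderStrip θ ∧ θ ⊆ D) ∧
  (∀ b ∈ D, ∃! θ : Set Box, θ ∈ P ∧ b ∈ θ) ∧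
  (∀ θ ∈ P, ∀ b : Box, IsStartBox θ b → ((b.1, b.2 - 1) ∉ D ∨ (b.1 + 1, b.2) ∉ D)) ∧
  (∀ θ ∈ P, ∀ b : Box, IsEndBox θ b → ((b.1 - 1, b.2) ∉ D ∨ (b.1, b.2 + 1) ∉ D))

/-- The box `b` of `D` goes up in the outside decomposition `P`: in the strip of `P`
containing it, the next box is directly above it; an ending box goes up when no box of `D`
lies directly above it. -/
def GoesUp (D : Set Box) (P : Set (Set Box)) (b : Box) : Prop :=
  ∃ θ ∈ P, b ∈ θ ∧ ((b.1 - 1, b.2) ∈ θ ∨ (IsEndBox θ b ∧ (b.1 - 1, b.2) ∉ D))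

/-- The box `b` of `D` goes right in the outside decomposition `P`: in the strip of `P`
containing it, the next box is directly to its right; an ending box goes right when some box
of `D` lies directly above it. -/
def GoesRight (D : Set Box) (P : Set (Set Box)) (b : Box) : Prop :=
  ∃ θ ∈ P, b ∈ θ ∧ ((b.1, b.2 + 1) ∈ θ ∨ (IsEndBox θ b ∧ (b.1 - 1, b.2) ∈ D))

/-- `T` is a cutting strip of the outside decomposition `P` of `D`: a border strip whose
boxes are labeled by the contents of `D` (each content appearing once), in which the box
labeled `c` goes up or goes right according as the boxes of the diagonal of content `c`
of `D` go up or go right in `P`. -/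
def IsCuttingStripOf (D : Set Box) (P : Set (Set Box)) (T : Set Box) : Prop :=
  IsBorderStrip T ∧ boxContent '' T = boxContent '' D ∧
  ∀ b ∈ T, ∀ c ∈ D, boxContent c = boxContent b →
    (((b.1 - 1, b.2) ∈ T → GoesUp D P c) ∧ ((b.1, b.2 + 1) ∈ T → GoesRight D P c))

/-- The segment `φ[p, q]` of a strip `T`: its boxes of content between `p` and `q`. -/
def stripSegment (T : Set Box) (p q : ℤ) : Set Box :=
  {b ∈ T | p ≤ boxContent b ∧ boxContent b ≤ q}

/-- The box of content `c` of the strip `T` goes up (the next box is directly above it). -/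
def StripGoesUpAt (T : Set Box) (c : ℤ) : Prop :=
  ∃ b ∈ T, boxContent b = c ∧ (b.1 - 1, b.2) ∈ T

/-- The box of content `c` of the strip `T` goes right (the next box is directly right of it). -/
def StripGoesRightAt (T : Set Box) (c : ℤ) : Prop :=
  ∃ b ∈ T, boxContent b = c ∧ (b.1, b.2 + 1) ∈ T

/-- `T'` is obtained from the strip `T` by reversing the direction (up versus right) of the
box labeled `i`, keeping the directions of all other boxes. -/
def IsTwist (i : ℤ) (T T' : Set Box) : Prop :=
  boxContent '' T' = boxContent '' T ∧
  (∀ c : ℤ, c ≠ i → (StripGoesUpAt T c ↔ StripGoesUpAt T' c)) ∧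
  (StripGoesUpAt T i ↔ StripGoesRightAt T' i)

/-- The inversion number of an outside decomposition: the number of ordered pairs of
strips `(θ₁, θ₂)` with `p(θ₁) > p(θ₂)` and `q(θ₁) < q(θ₂)`. -/
def invOD (P : Set (Set Box)) : ℕ :=
  {θθ : Set Box × Set Box | θθ.1 ∈ P ∧ θθ.2 ∈ P ∧
    ∃ p₁ q₁ p₂ q₂ : ℤ, HasPQ θθ.1 p₁ q₁ ∧ HasPQ θθ.2 p₂ q₂ ∧ p₂ < p₁ ∧ q₁ < q₂}.ncard

/-- A semistandard Young tableau of shape `D`: entries (variable indices) weakly increase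
along rows and strictly increase down columns; entries outside `D` are normalized to `0`. -/
def IsSSYT (D : Set Box) (T : Box → ℕ) : Prop :=
  (∀ b ∈ D, (b.1, b.2 + 1) ∈ D → T b ≤ T (b.1, b.2 + 1)) ∧
  (∀ b ∈ D, (b.1 + 1, b.2) ∈ D → T b < T (b.1 + 1, b.2)) ∧
  (∀ b : Box, b ∉ D → T b = 0)

/-- The skew Schur function of a skew diagram `D`, as a formal power series in the
variables `x_n` (`n : ℕ`): the coefficient of a monomial `μ` is the number of semistandard
Young tableaux of shape `D` using each variable `n` exactly `μ n` times. -/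
def schur (D : Set Box) : MvPowerSeries ℕ ℤ :=
  fun μ => ({T : Box → ℕ | IsSSYT D T ∧ ∀ n : ℕ, μ n = {b ∈ D | T b = n}.ncard}.ncard : ℤ)

/-- `b` is the upper-right corner box of `D`: the rightmost box of the top row. -/
def IsUpperRightCorner (D : Set Box) (b : Box) : Prop :=
  b ∈ D ∧ (∀ c ∈ D, b.1 ≤ c.1) ∧ ∀ c ∈ D, c.1 = b.1 → c.2 ≤ b.2

/-- `b` is the lower-left corner box of `D`: the leftmost box of the bottom row. -/
def IsLowerLeftCorner (D : Set Box) (b : Box) : Prop :=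
  b ∈ D ∧ (∀ c ∈ D, c.1 ≤ b.1) ∧ ∀ c ∈ D, c.1 = b.1 → b.2 ≤ c.2

/-- The block (edgewise connected component) of `D` containing the box `a`. -/
def blockOf (D : Set Box) (a : Box) : Set Box :=
  {b : Box | Relation.ReflTransGen (fun x y => x ∈ D ∧ y ∈ D ∧ boxAdj x y) a b}

/-- The complete homogeneous symmetric function `h_r` (`h_0 = 1`, `h_r = 0` for `r < 0`):
the sum of all monomials of degree `r`. -/
def hSym (r : ℤ) : MvPowerSeries ℕ ℤ :=
  fun μ => if ((μ.sum fun _ e => e : ℕ) : ℤ) = r then 1 else 0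

/-- The elementary symmetric function `e_r` (`e_0 = 1`, `e_r = 0` for `r < 0`):
the sum of all squarefree monomials of degree `r`. -/
def eSym (r : ℤ) : MvPowerSeries ℕ ℤ :=
  fun μ => if (∀ n ∈ μ.support, μ n = 1) ∧ ((μ.sum fun _ e => e : ℕ) : ℤ) = r then 1 else 0

/-- The `j`-th part (`j ≥ 1`) of the conjugate partition: the number of indices `i ≥ 1`
with `λ_i ≥ j`. -/
def conjPart (lam : Partition') (j : ℕ) : ℕ := {i : ℕ | 1 ≤ i ∧ j ≤ lam.part i}.ncard

/-- The order on the supersymmetric alphabet `x_0 < x_1 < ⋯ < y_0 < y_1 < ⋯`,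
with `Sum.inl n` representing `x_n` and `Sum.inr n` representing `y_n`. -/
def entryLE : ℕ ⊕ ℕ → ℕ ⊕ ℕ → Prop
  | Sum.inl a, Sum.inl b => a ≤ b
  | Sum.inl _, Sum.inr _ => True
  | Sum.inr _, Sum.inl _ => False
  | Sum.inr a, Sum.inr b => a ≤ b

/-- A super tableau of shape `D`: rows and columns weakly increase, the `x`-symbols
strictly increase down columns, the `y`-symbols strictly increase along rows; entries
outside `D` are normalized to `Sum.inl 0`. -/
def IsSuperSSYT (D : Set Box) (T : Box → ℕ ⊕ ℕ) : Prop :=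
  (∀ b ∈ D, (b.1, b.2 + 1) ∈ D → entryLE (T b) (T (b.1, b.2 + 1))) ∧
  (∀ b ∈ D, (b.1 + 1, b.2) ∈ D → entryLE (T b) (T (b.1 + 1, b.2))) ∧
  (∀ b ∈ D, (b.1 + 1, b.2) ∈ D →
    ∀ a c : ℕ, T b = Sum.inl a → T (b.1 + 1, b.2) = Sum.inl c → a < c) ∧
  (∀ b ∈ D, (b.1, b.2 + 1) ∈ D →
    ∀ a c : ℕ, T b = Sum.inr a → T (b.1, b.2 + 1) = Sum.inr c → a < c) ∧
  (∀ b : Box, b ∉ D → T b = Sum.inl 0)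

/-- The supersymmetric skew Schur function `s_D(X, Y)`, as a formal power series in the
variables `x_n, y_n`: the coefficient of a monomial `μ` is the number of super tableaux
of shape `D` using each symbol `v` exactly `μ v` times. -/
def superSchur (D : Set Box) : MvPowerSeries (ℕ ⊕ ℕ) ℤ :=
  fun μ =>
    ({T : Box → ℕ ⊕ ℕ | IsSuperSSYT D T ∧
        ∀ v : ℕ ⊕ ℕ, μ v = {b ∈ D | T b = v}.ncard}.ncard : ℤ)

/-!
A border strip whose contents form a given interval is determined, up to translation, by the
set `u` of contents at which it goes up, and every `u` is realised by the staircase path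
`ribbon u s d`. By the nested property of Hamel and Goulden, all boxes of a diagonal of `λ/μ` go
the same way in an outside decomposition `Π`, which gives the `u` of its cutting strip; and `Π`
is recovered from `u`, since two adjacent boxes lie in the same strip exactly when the lower
or left one goes towards the other. Conversely, cutting the staircase paths with directions
`u` into their maximal segments inside `λ/μ` gives an outside decomposition whose cutting strip
has directions `u`.
-/

section Translation

lemma mem_boxTranslate {v b : Box} {D : Set Box} : b ∈ boxTranslate v D ↔ b - v ∈ D :=
  ⟨by rintro ⟨a, ha, rfl⟩; simpa using ha, fun h => ⟨b - v, h, sub_add_cancel b v⟩⟩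

lemma add_mem_boxTranslate {v b : Box} {D : Set Box} (hb : b ∈ D) : b + v ∈ boxTranslate v D :=
  ⟨b, hb, rfl⟩

lemma boxTranslate_boxTranslate (v w : Box) (D : Set Box) :
    boxTranslate w (boxTranslate v D) = boxTranslate (v + w) D := by
  simp only [boxTranslate, Set.image_image, add_assoc]

lemma boxContent_add (a b : Box) : boxContent (a + b) = boxContent a + boxContent b := by
  simp only [boxContent, Prod.fst_add, Prod.snd_add]; ring

lemma image_boxContent_boxTranslate (v : Box) (B : Set Box) :
    boxContent '' boxTranslate v B = (· + boxContent v) '' (boxContent '' B) := by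
  simp only [boxTranslate, Set.image_image, boxContent_add]

lemma boxAdj_add_right {a b : Box} (v : Box) : boxAdj (a + v) (b + v) ↔ boxAdj a b := by
  simp only [boxAdj, Prod.fst_add, Prod.snd_add]; omega

lemma boxAdj_symm {a b : Box} (h : boxAdj a b) : boxAdj b a := by
  unfold boxAdj at *; omega

lemma NoTwoByTwo.translate {D : Set Box} (h : NoTwoByTwo D) (v : Box) :
    NoTwoByTwo (boxTranslate v D) := by
  rintro b ⟨h₀, h₁, h₂, h₃⟩
  simp only [mem_boxTranslate] at h₀ h₁ h₂ h₃
  refine h (b - v) ⟨h₀, ?_, ?_, ?_⟩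
  · convert h₁ using 1; ext <;> simp; ring
  · convert h₂ using 1; ext <;> simp; ring
  · convert h₃ using 1; ext <;> simp <;> ring

lemma EdgewiseConnected.translate {D : Set Box} (h : EdgewiseConnected D) (v : Box) :
    EdgewiseConnected (boxTranslate v D) := by
  intro a ha b hb
  rw [mem_boxTranslate] at ha hb
  simpa [Function.onFun] using Relation.ReflTransGen.lift (p := fun x y => x ∈ boxTranslate v D ∧
      y ∈ boxTranslate v D ∧ boxAdj x y) (· + v)
    (fun x y hxy => ⟨add_mem_boxTranslate hxy.1, add_mem_boxTranslate hxy.2.1,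
      (boxAdj_add_right v).2 hxy.2.2⟩) _ _ (h _ ha _ hb)

lemma IsSkewLike.translate {D : Set Box} (h : IsSkewLike D) (v : Box) :
    IsSkewLike (boxTranslate v D) := by
  obtain ⟨w, hw⟩ := h
  exact ⟨w - v, by rwa [boxTranslate_boxTranslate, add_sub_cancel]⟩

lemma IsBorderStrip.translate {B : Set Box} (h : IsBorderStrip B) (v : Box) :
    IsBorderStrip (boxTranslate v B) :=
  ⟨h.1.image _, h.2.1.translate v, h.2.2.1.translate v, h.2.2.2.translate v⟩

lemma stripGoesUpAt_boxTranslate {v : Box} {B : Set Box} {i : ℤ} :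
    StripGoesUpAt (boxTranslate v B) i ↔ StripGoesUpAt B (i - boxContent v) := by
  constructor
  · rintro ⟨b, hb, rfl, habove⟩
    rw [mem_boxTranslate] at hb habove
    refine ⟨b - v, hb, ?_, by convert habove using 1; ext <;> simp; ring⟩
    simp only [boxContent, Prod.fst_sub, Prod.snd_sub]; ring
  · rintro ⟨b, hb, hbc, habove⟩
    refine ⟨b + v, add_mem_boxTranslate hb, by rw [boxContent_add]; omega, ?_⟩
    convert add_mem_boxTranslate (v := v) habove using 1
    ext <;> simp; ring

end Translation

section SkewShape

lemma IsSkewShape.ordConnected {D : Set Box} (hD : IsSkewShape D) : D.OrdConnected := by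
  obtain ⟨lam, mu, -, rfl⟩ := hD
  refine ⟨fun x hx y hy z hz => ?_⟩
  obtain ⟨hx1, hx2, -⟩ := hx
  obtain ⟨-, -, hy3⟩ := hy
  have hxz := Prod.le_def.1 hz.1
  have hzy := Prod.le_def.1 hz.2
  have hmu : mu.part z.1.toNat ≤ mu.part x.1.toNat := mu.antitone (Int.toNat_le_toNat hxz.1)
  have hlam : lam.part y.1.toNat ≤ lam.part z.1.toNat := lam.antitone (Int.toNat_le_toNat hzy.1)
  exact ⟨by omega, by omega, by omega⟩

lemma IsSkewShape.finite {D : Set Box} (hD : IsSkewShape D) : D.Finite := by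
  obtain ⟨lam, mu, -, rfl⟩ := hD
  obtain ⟨N, hN⟩ := lam.eventually_zero
  refine (Set.finite_Icc ((1 : ℤ), (1 : ℤ)) ((N : ℤ), (lam.part 1 : ℤ))).subset ?_
  rintro ⟨r, c⟩ ⟨h1, h2, h3⟩
  dsimp only at h1 h2 h3
  have hrN : r ≤ N := by
    by_contra hr
    have := hN r.toNat (by omega)
    simp only [this] at h3
    omega
  have hlam : lam.part r.toNat ≤ lam.part 1 := lam.antitone (by omega)
  simp only [Set.mem_Icc, Prod.mk_le_mk]
  omega

lemma IsSkewLike.ordConnected {D : Set Box} (hD : IsSkewLike D) : D.OrdConnected := by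
  obtain ⟨v, hv⟩ := hD
  refine ⟨fun x hx y hy z ⟨hxz, hzy⟩ => ?_⟩
  have := hv.ordConnected.out (add_mem_boxTranslate hx) (add_mem_boxTranslate hy)
    ⟨add_le_add hxz le_rfl, add_le_add hzy le_rfl⟩
  simpa [mem_boxTranslate] using this

lemma NoTwoByTwo.injOn_boxContent {D : Set Box} (h22 : NoTwoByTwo D) (hconv : D.OrdConnected) :
    Set.InjOn boxContent D := by
  have key : ∀ x ∈ D, ∀ y ∈ D, boxContent x = boxContent y → x.1 ≤ y.1 → x = y := by
    intro x hx y hy hc hle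
    unfold boxContent at hc
    rcases hle.eq_or_lt with h | h
    · ext <;> omega
    have mem : ∀ z : Box, x.1 ≤ z.1 → z.1 ≤ y.1 → x.2 ≤ z.2 → z.2 ≤ y.2 → z ∈ D :=
      fun z h1 h2 h3 h4 => hconv.out hx hy ⟨Prod.le_def.2 ⟨h1, h3⟩, Prod.le_def.2 ⟨h2, h4⟩⟩
    exact absurd ⟨hx, mem _ le_rfl h.le (by simp) (by simp; omega),
      mem _ (by simp) (by simp; omega) le_rfl (by omega),
      mem _ (by simp) (by simp; omega) (by simp) (by simp; omega)⟩ (h22 x)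
  intro x hx y hy hc
  rcases le_total x.1 y.1 with h | h
  · exact key x hx y hy hc h
  · exact (key y hy x hx hc.symm h).symm

lemma IsBorderStrip.injOn_boxContent {B : Set Box} (hB : IsBorderStrip B) :
    Set.InjOn boxContent B :=
  hB.2.2.2.injOn_boxContent hB.2.1.ordConnected

lemma Set.OrdConnected.above_mem_or_right_mem {D : Set Box} (hconv : D.OrdConnected)
    {c e : Box} (hc : c ∈ D) (he : e ∈ D) (hce : boxContent e = boxContent c + 1) :
    (c.1 - 1, c.2) ∈ D ∨ (c.1, c.2 + 1) ∈ D := by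
  unfold boxContent at hce
  rcases lt_trichotomy e.1 c.1 with h | h | h
  · exact .inl (hconv.out he hc ⟨Prod.le_def.2 ⟨by simp; omega, by simp; omega⟩,
      Prod.le_def.2 ⟨by simp, le_rfl⟩⟩)
  · exact .inr (by convert he using 1; ext <;> simp <;> omega)
  · exact .inr (hconv.out hc he ⟨Prod.le_def.2 ⟨le_rfl, by simp⟩,
      Prod.le_def.2 ⟨by simp; omega, by simp; omega⟩⟩)

/-- Row `i ≥ 1` of the partition is row `i - 1` of `γ`; truncated subtraction makes the
unused part `0` equal to part `1`. -/
def YoungDiagram.toPartition' (γ : YoungDiagram) : Partition' where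
  part i := γ.rowLen (i - 1)
  antitone _ _ h := γ.rowLen_anti _ _ (Nat.sub_le_sub_right h 1)
  eventually_zero := ⟨γ.colLen 0 + 1, fun i hi => by
    by_contra h
    have := YoungDiagram.mem_iff_lt_rowLen.2 (Nat.pos_of_ne_zero h)
    rw [YoungDiagram.mem_iff_lt_colLen] at this
    omega⟩

def cellBox (p : ℕ × ℕ) : Box := ((p.1 : ℤ) + 1, (p.2 : ℤ) + 1)

lemma cellBox_injective : Function.Injective cellBox := by
  intro p q h
  simp only [cellBox, Prod.mk.injEq] at h
  ext <;> omega

lemma cellBox_le_cellBox {p q : ℕ × ℕ} : cellBox p ≤ cellBox q ↔ p ≤ q := by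
  simp only [cellBox, Prod.le_def]; omega

lemma mem_skewCells_toPartition' {γ δ : YoungDiagram} {b : Box} :
    b ∈ skewCells γ.toPartition' δ.toPartition' ↔ ∃ p ∈ γ, p ∉ δ ∧ cellBox p = b := by
  obtain ⟨r, c⟩ := b
  simp only [skewCells, YoungDiagram.toPartition', Set.mem_ofPred_eq, cellBox, Prod.mk.injEq]
  have hr : r.toNat - 1 = (r - 1).toNat := by omega
  rw [hr]
  constructor
  · rintro ⟨h1, h2, h3⟩
    refine ⟨((r - 1).toNat, (c - 1).toNat), ?_, ?_, by omega, by omega⟩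
    · rw [YoungDiagram.mem_iff_lt_rowLen]; omega
    · rw [YoungDiagram.mem_iff_lt_rowLen]; omega
  · rintro ⟨⟨i, j⟩, hγ, hδ, rfl, rfl⟩
    rw [YoungDiagram.mem_iff_lt_rowLen] at hγ hδ
    simp only [add_sub_cancel_right, Int.toNat_natCast]
    omega

/-- `λ` is the lower closure of `D` and `μ` the part of it outside `D`; order-convexity of `D`
is what makes `μ` a lower set. -/
lemma isSkewShape_of_ordConnected {D : Set Box} (hfin : D.Finite) (hconv : D.OrdConnected)
    (hpos : ∀ x ∈ D, ((1, 1) : Box) ≤ x) : IsSkewShape D := by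
  classical
  set E := (hfin.preimage cellBox_injective.injOn).toFinset
  let outer : YoungDiagram := ⟨E.biUnion Finset.Iic, fun p q hqp hp => by
    simp only [Finset.coe_biUnion, Set.mem_iUnion, Finset.mem_coe, Finset.mem_Iic] at hp ⊢
    obtain ⟨e, he, hpe⟩ := hp
    exact ⟨e, he, hqp.trans hpe⟩⟩
  let inner : YoungDiagram := ⟨outer.cells.filter (fun p => cellBox p ∉ D), fun p q hqp hp => by
    simp only [Finset.coe_filter, Set.mem_ofPred_eq] at hp ⊢
    refine ⟨outer.isLowerSet hqp hp.1, fun hq => hp.2 ?_⟩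
    obtain ⟨e, he, hpe⟩ := Finset.mem_biUnion.1 hp.1
    simp only [E, Set.Finite.mem_toFinset, Set.mem_preimage] at he
    exact hconv.out hq he ⟨cellBox_le_cellBox.2 hqp, cellBox_le_cellBox.2 (Finset.mem_Iic.1 hpe)⟩⟩
  have hle (i : ℕ) : inner.rowLen i ≤ outer.rowLen i := by
    by_contra h
    have := YoungDiagram.mem_iff_lt_rowLen.2 (not_le.1 h)
    exact (YoungDiagram.mem_iff_lt_rowLen.1 (Finset.mem_filter.1 this).1).false
  refine ⟨outer.toPartition', inner.toPartition', fun i => hle _, ?_⟩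
  ext b
  rw [mem_skewCells_toPartition']
  constructor
  · intro hb
    have h1 := Prod.le_def.1 (hpos b hb)
    have hcell : cellBox ((b.1 - 1).toNat, (b.2 - 1).toNat) = b := by
      simp only [cellBox]; ext <;> simp <;> omega
    refine ⟨_, Finset.mem_biUnion.2 ⟨_, ?_, Finset.mem_Iic.2 le_rfl⟩,
      fun h => (Finset.mem_filter.1 h).2 (by rw [hcell]; exact hb), hcell⟩
    simp only [E, Set.Finite.mem_toFinset, Set.mem_preimage, hcell, hb]
  · rintro ⟨p, hp, hpi, rfl⟩
    by_contra h
    exact hpi (Finset.mem_filter.2 ⟨hp, h⟩)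

lemma isSkewLike_of_ordConnected {D : Set Box} (hfin : D.Finite) (hconv : D.OrdConnected) :
    IsSkewLike D := by
  obtain ⟨a, ha⟩ := hfin.bddBelow
  refine ⟨(1, 1) - a, isSkewShape_of_ordConnected (hfin.image _)
    (Set.ordConnected_image (OrderIso.addRight _)) ?_⟩
  rintro _ ⟨x, hx, rfl⟩
  calc ((1, 1) : Box) = a + ((1, 1) - a) := by abel
    _ ≤ x + ((1, 1) - a) := add_le_add (ha hx) le_rfl

end SkewShape

section Connected

variable {D : Set Box}

lemma boxContent_of_boxAdj {a b : Box} (h : boxAdj a b) :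
    boxContent b = boxContent a + 1 ∨ boxContent a = boxContent b + 1 := by
  unfold boxAdj at h; unfold boxContent; omega

lemma EdgewiseConnected.exists_boxAdj_of_boxContent (hconn : EdgewiseConnected D)
    {x y : Box} (hx : x ∈ D) (hy : y ∈ D) {i : ℤ} (hxi : boxContent x ≤ i)
    (hiy : i + 1 ≤ boxContent y) :
    ∃ a ∈ D, ∃ b ∈ D, boxAdj a b ∧ boxContent a = i ∧ boxContent b = i + 1 := by
  induction hconn x hx y hy with
  | refl => omega
  | @tail b b' _ hstep ih =>
    by_cases hb : i + 1 ≤ boxContent b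
    · exact ih hstep.1 hb
    · have := boxContent_of_boxAdj hstep.2.2
      exact ⟨b, hstep.1, b', hstep.2.1, hstep.2.2, by omega, by omega⟩

lemma EdgewiseConnected.image_boxContent_eq_Icc (hconn : EdgewiseConnected D) (hfin : D.Finite)
    (hne : D.Nonempty) :
    ∃ p : ℤ, boxContent '' D = Set.Icc p (p + (boxContent '' D).ncard - 1) := by
  obtain ⟨sp, hsp, hpmin⟩ := Set.exists_min_image D boxContent hfin hne
  obtain ⟨sq, hsq, hqmax⟩ := Set.exists_max_image D boxContent hfin hne
  have hIcc : boxContent '' D = Set.Icc (boxContent sp) (boxContent sq) := by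
    refine subset_antisymm ?_ fun c ⟨hpc, hcq⟩ => ?_
    · rintro _ ⟨x, hx, rfl⟩
      exact ⟨hpmin x hx, hqmax x hx⟩
    · rcases hcq.eq_or_lt with rfl | hlt
      · exact ⟨sq, hsq, rfl⟩
      · obtain ⟨a, ha, -, -, -, hac, -⟩ := hconn.exists_boxAdj_of_boxContent hsp hsq hpc hlt
        exact ⟨a, ha, hac⟩
  have hpq := hpmin sq hsq
  refine ⟨boxContent sp, ?_⟩
  rw [hIcc, ← Finset.coe_Icc, Set.ncard_coe_finset, Int.card_Icc, Finset.coe_Icc]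
  congr 1
  omega

lemma IsBorderStrip.eq_above_or_eq_right {B : Set Box} (hB : IsBorderStrip B) {x y : Box}
    (hx : x ∈ B) (hy : y ∈ B) (hxy : boxContent y = boxContent x + 1) :
    y = (x.1 - 1, x.2) ∨ y = (x.1, x.2 + 1) := by
  obtain ⟨a, ha, b, hb, hadj, hax, hby⟩ :=
    hB.2.2.1.exists_boxAdj_of_boxContent hx hy le_rfl hxy.ge
  obtain rfl : a = x := hB.injOn_boxContent ha hx hax
  obtain rfl : b = y := hB.injOn_boxContent hb hy (by omega)
  unfold boxAdj at hadj; unfold boxContent at hax hby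
  rcases hadj with ⟨h1, h2 | h2⟩ | ⟨h1, h2 | h2⟩
  all_goals first
    | exact .inl (Prod.ext (by simp; omega) (by simp; omega))
    | exact .inr (Prod.ext (by simp; omega) (by simp; omega))

end Connected

section Ribbon

open scoped Classical in
def nextBox (u : ℤ → Prop) (b : Box) : Box :=
  if u (boxContent b) then (b.1 - 1, b.2) else (b.1, b.2 + 1)

open scoped Classical in
def prevBox (u : ℤ → Prop) (b : Box) : Box :=
  if u (boxContent b - 1) then (b.1 + 1, b.2) else (b.1, b.2 - 1)

def ribbon (u : ℤ → Prop) (s : Box) (m : ℕ) : Set Box :=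
  (fun k => (nextBox u)^[k] s) '' Set.Iio m

variable (u : ℤ → Prop) (s : Box) (m : ℕ)

lemma nextBox_eq_above_iff {u : ℤ → Prop} {b : Box} :
    nextBox u b = (b.1 - 1, b.2) ↔ u (boxContent b) := by
  unfold nextBox; split_ifs with h <;> simp [h]

lemma nextBox_eq_right_iff {u : ℤ → Prop} {b : Box} :
    nextBox u b = (b.1, b.2 + 1) ↔ ¬u (boxContent b) := by
  unfold nextBox; split_ifs with h <;> simp [h]

lemma boxContent_nextBox : boxContent (nextBox u s) = boxContent s + 1 := by
  unfold nextBox boxContent; split_ifs <;> simp <;> ring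

lemma prevBox_nextBox : prevBox u (nextBox u s) = s := by
  unfold prevBox
  rw [boxContent_nextBox, add_sub_cancel_right]
  by_cases h : u (boxContent s)
  · rw [if_pos h, nextBox_eq_above_iff.2 h]; simp
  · rw [if_neg h, nextBox_eq_right_iff.2 h]; simp

lemma nextBox_cases (b : Box) :
    nextBox u b = (b.1 - 1, b.2) ∨ nextBox u b = (b.1, b.2 + 1) := by
  unfold nextBox; split_ifs <;> simp

lemma prevBox_cases (b : Box) :
    prevBox u b = (b.1 + 1, b.2) ∨ prevBox u b = (b.1, b.2 - 1) := by
  unfold prevBox; split_ifs <;> simp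

lemma nextBox_prevBox (b : Box) : nextBox u (prevBox u b) = b := by
  have hc : boxContent (prevBox u b) = boxContent b - 1 := by
    unfold prevBox boxContent; split_ifs <;> simp <;> ring
  unfold nextBox
  rw [hc]
  unfold prevBox
  split_ifs <;> simp

lemma nextBox_injective : Function.Injective (nextBox u) :=
  Function.LeftInverse.injective (prevBox_nextBox u)

lemma boxContent_iterate_nextBox (k : ℕ) :
    boxContent ((nextBox u)^[k] s) = boxContent s + k := by
  induction k with
  | zero => simp
  | succ k ih => rw [Function.iterate_succ_apply', boxContent_nextBox, ih]; push_cast; ring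

lemma antitone_fst_iterate_nextBox : Antitone fun k => ((nextBox u)^[k] s).1 := by
  refine antitone_nat_of_succ_le fun k => ?_
  simp only [Function.iterate_succ_apply', nextBox]
  split_ifs <;> simp

lemma monotone_snd_iterate_nextBox : Monotone fun k => ((nextBox u)^[k] s).2 := by
  refine monotone_nat_of_le_succ fun k => ?_
  simp only [Function.iterate_succ_apply', nextBox]
  split_ifs <;> simp

lemma boxAdj_iterate_nextBox (k : ℕ) :
    boxAdj ((nextBox u)^[k] s) ((nextBox u)^[k + 1] s) := by
  rw [Function.iterate_succ_apply']
  unfold nextBox boxAdj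
  split_ifs <;> simp

variable {u s m}

lemma mem_ribbon {x : Box} : x ∈ ribbon u s m ↔ ∃ k < m, (nextBox u)^[k] s = x := Iff.rfl

lemma iterate_nextBox_mem_ribbon {k : ℕ} (hk : k < m) : (nextBox u)^[k] s ∈ ribbon u s m :=
  ⟨k, hk, rfl⟩

variable (u s m)

lemma image_boxContent_ribbon :
    boxContent '' ribbon u s m = Set.Icc (boxContent s) (boxContent s + m - 1) := by
  ext c
  simp only [ribbon, Set.image_image, boxContent_iterate_nextBox, Set.mem_image, Set.mem_Iio,
    Set.mem_Icc]
  constructor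
  · rintro ⟨k, hk, rfl⟩; omega
  · rintro ⟨h1, h2⟩; exact ⟨(c - boxContent s).toNat, by omega, by omega⟩

lemma injOn_boxContent_ribbon : Set.InjOn boxContent (ribbon u s m) := by
  rintro _ ⟨k, -, rfl⟩ _ ⟨l, -, rfl⟩ h
  rw [boxContent_iterate_nextBox, boxContent_iterate_nextBox] at h
  rw [show k = l by omega]

lemma iterate_nextBox_injective : Function.Injective fun k : ℕ => (nextBox u)^[k] s := by
  intro k l h
  have := congrArg boxContent h
  simp only [boxContent_iterate_nextBox] at this
  omega

lemma ncard_ribbon : (ribbon u s m).ncard = m := by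
  rw [ribbon, Set.ncard_image_of_injective _ (iterate_nextBox_injective u s), ← Finset.coe_range,
    Set.ncard_coe_finset, Finset.card_range]

lemma ribbon_ordConnected : (ribbon u s m).OrdConnected := by
  refine ⟨?_⟩
  rintro _ ⟨k, hk, rfl⟩ _ ⟨l, hl, rfl⟩ z ⟨hxz, hzy⟩
  rw [Set.mem_Iio] at hk hl
  simp only [Prod.le_def] at hxz hzy
  have hc (i : ℕ) : ((nextBox u)^[i] s).2 - ((nextBox u)^[i] s).1 = boxContent s + i :=
    boxContent_iterate_nextBox u s i
  have hrow {i j : ℕ} (h : i ≤ j) := antitone_fst_iterate_nextBox u s h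
  have hcol {i j : ℕ} (h : i ≤ j) := monotone_snd_iterate_nextBox u s h
  simp only at hrow hcol
  obtain ⟨j, hj⟩ : ∃ j : ℕ, z.2 - z.1 = boxContent s + j := by
    refine ⟨(z.2 - z.1 - boxContent s).toNat, ?_⟩
    have := hc k; have := hc l
    rcases le_total k l with hkl | hlk
    · have := hrow hkl; omega
    · have := hcol hlk; omega
  suffices (nextBox u)^[j] s = z ∧ j < m from ⟨j, this.2, this.1⟩
  have := hc k; have := hc l; have := hc j
  rcases le_total k l with hkl | hlk
  · have := hrow hkl
    have hkj : k ≤ j := by omega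
    have hjl : j ≤ l := by omega
    have := hrow hkj; have := hrow hjl
    exact ⟨Prod.ext (by omega) (by omega), by omega⟩
  · have := hcol hlk
    have hlj : l ≤ j := by omega
    have hjk : j ≤ k := by omega
    have := hcol hlj; have := hcol hjk
    exact ⟨Prod.ext (by omega) (by omega), by omega⟩

lemma ribbon_noTwoByTwo : NoTwoByTwo (ribbon u s m) := by
  rintro b ⟨hb, -, -, hb'⟩
  have := congrArg Prod.fst (injOn_boxContent_ribbon u s m hb hb' (by simp [boxContent]))
  simp at this

lemma ribbon_edgewiseConnected : EdgewiseConnected (ribbon u s m) := by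
  have chain : ∀ k l, k ≤ l → l < m → Relation.ReflTransGen
      (fun x y => x ∈ ribbon u s m ∧ y ∈ ribbon u s m ∧ boxAdj x y)
      ((nextBox u)^[k] s) ((nextBox u)^[l] s) := by
    intro k l hkl hl
    induction l, hkl using Nat.le_induction with
    | base => exact .refl
    | succ l hkl ih =>
      exact (ih (by omega)).tail ⟨iterate_nextBox_mem_ribbon (by omega),
        iterate_nextBox_mem_ribbon hl, boxAdj_iterate_nextBox u s l⟩
  rintro _ ⟨k, hk, rfl⟩ _ ⟨l, hl, rfl⟩
  rcases le_total k l with h | h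
  · exact chain k l h hl
  · exact Relation.ReflTransGen.mono (fun x y h => ⟨h.2.1, h.1, boxAdj_symm h.2.2⟩) _ _
      (Relation.ReflTransGen.swap _ _ (chain l k h hk))

lemma isBorderStrip_ribbon (hm : m ≠ 0) : IsBorderStrip (ribbon u s m) :=
  ⟨⟨s, 0, Nat.pos_of_ne_zero hm, rfl⟩,
    isSkewLike_of_ordConnected ((Set.finite_Iio m).image _) (ribbon_ordConnected u s m),
    ribbon_edgewiseConnected u s m, ribbon_noTwoByTwo u s m⟩

end Ribbon

section RibbonShape

variable {u : ℤ → Prop} {s : Box} {m : ℕ}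

lemma eq_of_isStartBox_ribbon {x : Box} (hx : IsStartBox (ribbon u s m) x) : x = s := by
  obtain ⟨hxB, hleft, hbelow⟩ := hx
  obtain ⟨k, hk, rfl⟩ := mem_ribbon.1 hxB
  cases k with
  | zero => rfl
  | succ k =>
    have hprev := iterate_nextBox_mem_ribbon (u := u) (s := s) (m := m) (k := k) (by omega)
    rw [Function.iterate_succ_apply'] at hleft hbelow
    rcases nextBox_cases u ((nextBox u)^[k] s) with h | h <;> rw [h] at hleft hbelow
    · exact absurd (by simpa using hprev) hbelow
    · exact absurd (by simpa using hprev) hleft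

lemma eq_of_isEndBox_ribbon {x : Box} (hx : IsEndBox (ribbon u s m) x) :
    x = (nextBox u)^[m - 1] s := by
  obtain ⟨hxB, habove, hright⟩ := hx
  obtain ⟨k, hk, rfl⟩ := mem_ribbon.1 hxB
  rcases (show k = m - 1 ∨ k + 1 < m by omega) with rfl | hk1
  · rfl
  have hnext := iterate_nextBox_mem_ribbon (u := u) (s := s) hk1
  rw [Function.iterate_succ_apply'] at hnext
  rcases nextBox_cases u ((nextBox u)^[k] s) with h | h <;> rw [h] at hnext
  · exact absurd hnext habove
  · exact absurd hnext hright

lemma nextBox_eq_of_mem_ribbon {x y : Box}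
    (hx : x ∈ ribbon u s m) (hy : y ∈ ribbon u s m) (hxy : boxContent y = boxContent x + 1) :
    nextBox u x = y := by
  obtain ⟨k, -, rfl⟩ := mem_ribbon.1 hx
  obtain ⟨l, -, rfl⟩ := mem_ribbon.1 hy
  rw [boxContent_iterate_nextBox, boxContent_iterate_nextBox] at hxy
  rw [show l = k + 1 by omega, Function.iterate_succ_apply']

lemma IsBorderStrip.nextBox_eq {B : Set Box} (hB : IsBorderStrip B) {x y : Box} (hx : x ∈ B)
    (hy : y ∈ B) (hxy : boxContent y = boxContent x + 1) :
    nextBox (StripGoesUpAt B) x = y := by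
  rcases hB.eq_above_or_eq_right hx hy hxy with rfl | rfl
  · exact nextBox_eq_above_iff.2 ⟨x, hx, rfl, hy⟩
  · refine nextBox_eq_right_iff.2 fun ⟨b, hb, hbx, habove⟩ => ?_
    obtain rfl := hB.injOn_boxContent hb hx hbx
    have := hB.injOn_boxContent habove hy (by simp only [boxContent]; ring)
    simp only [Prod.mk.injEq] at this
    omega

lemma IsBorderStrip.eq_ribbon {B : Set Box} (hB : IsBorderStrip B) (hs : s ∈ B)
    (hcont : boxContent '' B = Set.Icc (boxContent s) (boxContent s + m - 1)) :
    B = ribbon (StripGoesUpAt B) s m := by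
  have hmem : ∀ k < m, (nextBox (StripGoesUpAt B))^[k] s ∈ B := by
    intro k hk
    induction k with
    | zero => exact hs
    | succ k ih =>
      obtain ⟨y, hy, hyc⟩ : boxContent s + k + 1 ∈ boxContent '' B := by
        rw [hcont]; constructor <;> omega
      rw [Function.iterate_succ_apply', hB.nextBox_eq (ih (by omega)) hy
        (by rw [hyc, boxContent_iterate_nextBox])]
      exact hy
  refine subset_antisymm (fun x hx => ?_) fun _ ⟨k, hk, hkx⟩ => hkx ▸ hmem k hk
  obtain ⟨h1, h2⟩ : boxContent x ∈ Set.Icc (boxContent s) (boxContent s + m - 1) :=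
    hcont ▸ ⟨x, hx, rfl⟩
  have hk : (boxContent x - boxContent s).toNat < m := by omega
  refine ⟨_, hk, hB.injOn_boxContent (hmem _ hk) hx ?_⟩
  rw [boxContent_iterate_nextBox]
  omega

lemma nextBox_congr {u' : ℤ → Prop} {b : Box} (h : u' (boxContent b) ↔ u (boxContent b)) :
    nextBox u' b = nextBox u b := by
  unfold nextBox; rw [propext h]

lemma nextBox_add {v : Box} (hv : boxContent v = 0) (u : ℤ → Prop) (b : Box) :
    nextBox u (b + v) = nextBox u b + v := by
  unfold nextBox
  rw [boxContent_add, hv, add_zero]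
  split_ifs <;> ext <;> simp <;> ring

lemma ribbon_eq_boxTranslate {u' : ℤ → Prop} {s' : Box}
    (hs : boxContent s' = boxContent s)
    (hu : ∀ i, boxContent s ≤ i → i + 1 < boxContent s + m → (u' i ↔ u i)) :
    ribbon u' s' m = boxTranslate (s' - s) (ribbon u s m) := by
  have hv : boxContent (s' - s) = 0 := by
    simp only [boxContent, Prod.fst_sub, Prod.snd_sub] at hs ⊢; omega
  have key : ∀ k < m, (nextBox u')^[k] s' = (nextBox u)^[k] s + (s' - s) := by
    intro k hk
    induction k with
    | zero => simp
    | succ k ih =>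
      have hc := boxContent_iterate_nextBox u s k
      rw [Function.iterate_succ_apply', Function.iterate_succ_apply', ih (by omega),
        ← nextBox_add hv]
      refine nextBox_congr ?_
      rw [boxContent_add, hv, add_zero, hc]
      exact hu _ (by omega) (by omega)
  ext x
  simp only [ribbon, boxTranslate, Set.image_image, Set.mem_image, Set.mem_Iio]
  constructor
  · rintro ⟨k, hk, rfl⟩; exact ⟨k, hk, (key k hk).symm⟩
  · rintro ⟨k, hk, rfl⟩; exact ⟨k, hk, key k hk⟩

end RibbonShape

def SameStrip (P : Set (Set Box)) (x y : Box) : Prop := ∃ θ ∈ P, x ∈ θ ∧ y ∈ θ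

lemma SameStrip.symm {P : Set (Set Box)} {x y : Box} (h : SameStrip P x y) : SameStrip P y x :=
  let ⟨θ, hθ, hx, hy⟩ := h; ⟨θ, hθ, hy, hx⟩

lemma sameStrip_above_iff {D : Set Box} {P : Set (Set Box)} {x : Box}
    (hA : (x.1 - 1, x.2) ∈ D) : SameStrip P x (x.1 - 1, x.2) ↔ GoesUp D P x :=
  ⟨fun ⟨θ, hθ, hx, hy⟩ => ⟨θ, hθ, hx, .inl hy⟩, fun ⟨θ, hθ, hx, h⟩ =>
    h.elim (fun hy => ⟨θ, hθ, hx, hy⟩) fun h => absurd hA h.2⟩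

namespace IsOutsideDecomposition

variable {D : Set Box} {P P' : Set (Set Box)}

lemma eq_of_mem (hP : IsOutsideDecomposition D P) {θ θ' : Set Box} (hθ : θ ∈ P) (hθ' : θ' ∈ P) {b : Box} (hb : b ∈ θ)
    (hb' : b ∈ θ') : θ = θ' :=
  (hP.2.1 b ((hP.1 θ hθ).2 hb)).unique ⟨hθ, hb⟩ ⟨hθ', hb'⟩

lemma goesRight_iff_not_goesUp (hP : IsOutsideDecomposition D P) {b : Box} (hb : b ∈ D) : GoesRight D P b ↔ ¬GoesUp D P b := by
  constructor
  · rintro ⟨θ, hθ, hbθ, hR⟩ ⟨θ', hθ', hbθ', hU⟩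
    obtain rfl := hP.eq_of_mem hθ hθ' hbθ hbθ'
    rcases hU with hU | ⟨hend, hnD⟩ <;> rcases hR with hR | ⟨hend', hD'⟩
    · have := (hP.1 θ hθ).1.injOn_boxContent hU hR (by simp only [boxContent]; ring)
      simp only [Prod.mk.injEq] at this
      omega
    · exact hend'.2.1 hU
    · exact hend.2.2 hR
    · exact hnD hD'
  · intro hnU
    obtain ⟨θ, ⟨hθ, hbθ⟩, -⟩ := hP.2.1 b hb
    by_cases hU : (b.1 - 1, b.2) ∈ θ
    · exact absurd ⟨θ, hθ, hbθ, .inl hU⟩ hnU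
    by_cases hR : (b.1, b.2 + 1) ∈ θ
    · exact ⟨θ, hθ, hbθ, .inl hR⟩
    by_cases hA : (b.1 - 1, b.2) ∈ D
    · exact ⟨θ, hθ, hbθ, .inr ⟨⟨hbθ, hU, hR⟩, hA⟩⟩
    · exact absurd ⟨θ, hθ, hbθ, .inr ⟨⟨hbθ, hU, hR⟩, hA⟩⟩ hnU

lemma goesUp_of_boxContent_succ_not_mem (hP : IsOutsideDecomposition D P) {b : Box} (hb : b ∈ D)
    (htop : boxContent b + 1 ∉ boxContent '' D) : GoesUp D P b := by
  have hA : (b.1 - 1, b.2) ∉ D := fun h => htop ⟨_, h, by simp only [boxContent]; ring⟩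
  have hR : (b.1, b.2 + 1) ∉ D := fun h => htop ⟨_, h, by simp only [boxContent]; ring⟩
  obtain ⟨θ, ⟨hθ, hbθ⟩, -⟩ := hP.2.1 b hb
  have hsub := (hP.1 θ hθ).2
  exact ⟨θ, hθ, hbθ, .inr ⟨⟨hbθ, fun h => hA (hsub h), fun h => hR (hsub h)⟩, hA⟩⟩

/-- Nested property of Hamel and Goulden: `(i, j + 1)` is not a starting box, so its strip
contains `(i, j)` or `(i + 1, j + 1)`, and it cannot contain both since they have the same
content. -/
lemma goesUp_iff_goesUp_add_one (hP : IsOutsideDecomposition D P) (hconv : D.OrdConnected) {i j : ℤ} (ha : (i, j) ∈ D)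
    (hb : (i + 1, j + 1) ∈ D) : GoesUp D P (i, j) ↔ GoesUp D P (i + 1, j + 1) := by
  have hX : (i, j + 1) ∈ D :=
    hconv.out ha hb ⟨Prod.le_def.2 ⟨le_rfl, by simp⟩, Prod.le_def.2 ⟨by simp, le_rfl⟩⟩
  have hbX : ((i + 1 : ℤ) - 1, j + 1) = (i, j + 1) := by simp
  obtain ⟨θ, ⟨hθ, hXθ⟩, -⟩ := hP.2.1 _ hX
  have hinj := (hP.1 θ hθ).1.injOn_boxContent
  rw [← not_iff_not, ← hP.goesRight_iff_not_goesUp ha, ← hP.goesRight_iff_not_goesUp hb]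
  constructor
  · rintro ⟨θa, hθa, haθ, hR | ⟨hend, hA⟩⟩ <;> rw [hP.goesRight_iff_not_goesUp hb] <;>
      rintro ⟨θb, hθb, hbθ, hU | ⟨-, hnA⟩⟩
    · obtain rfl := hP.eq_of_mem hθa hθ hR hXθ
      rw [hbX] at hU
      obtain rfl := hP.eq_of_mem hθb hθa hU hR
      have := hinj haθ hbθ (by simp only [boxContent]; ring)
      simp at this
    · exact hnA (hbX ▸ hX)
    · exact (hP.2.2.2 θa hθa _ hend).elim (· hA) (· hX)
    · exact (hP.2.2.2 θa hθa _ hend).elim (· hA) (· hX)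
  · intro hnR
    rcases (show (i, j) ∈ θ ∨ (i + 1, j + 1) ∈ θ by
      by_contra! h
      refine (hP.2.2.1 θ hθ _ ⟨hXθ, by simpa using h.1, by simpa using h.2⟩).elim ?_ ?_
      · exact (· (by simpa using ha))
      · exact (· hb)) with haθ | hbθ
    · exact ⟨θ, hθ, haθ, .inl hXθ⟩
    · exact absurd ⟨θ, hθ, hbθ, .inl (hbX ▸ hXθ)⟩ ((hP.goesRight_iff_not_goesUp hb).1 hnR)

lemma goesUp_iff_of_boxContent_eq (hP : IsOutsideDecomposition D P) (hconv : D.OrdConnected) {x y : Box} (hx : x ∈ D)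
    (hy : y ∈ D) (hxy : boxContent x = boxContent y) : GoesUp D P x ↔ GoesUp D P y := by
  wlog hle : x.1 ≤ y.1 generalizing x y
  · exact (this hy hx hxy.symm (by omega)).symm
  obtain ⟨t, ht⟩ : ∃ t : ℕ, y.1 = x.1 + t := ⟨(y.1 - x.1).toNat, by omega⟩
  induction t generalizing y with
  | zero =>
    obtain rfl : y = x := by unfold boxContent at hxy; ext <;> omega
    rfl
  | succ t ih =>
    unfold boxContent at hxy
    have hz : (y.1 - 1, y.2 - 1) ∈ D := hconv.out hx hy
      ⟨Prod.le_def.2 ⟨by simp; omega, by simp; omega⟩, Prod.le_def.2 ⟨by simp, by simp⟩⟩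
    rw [ih hz (by simp [boxContent]; omega) (by simp; omega) (by simp; omega)]
    simpa using hP.goesUp_iff_goesUp_add_one hconv hz (by simpa using hy)

lemma sameStrip_right_iff (hP : IsOutsideDecomposition D P) {x : Box}
    (hR : (x.1, x.2 + 1) ∈ D) : SameStrip P x (x.1, x.2 + 1) ↔ GoesRight D P x :=
  ⟨fun ⟨θ, hθ, hx, hy⟩ => ⟨θ, hθ, hx, .inl hy⟩, fun ⟨θ, hθ, hx, h⟩ =>
    h.elim (fun hy => ⟨θ, hθ, hx, hy⟩) fun ⟨hend, hA⟩ =>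
      (hP.2.2.2 θ hθ x hend).elim (absurd hA) (absurd hR)⟩

lemma sameStrip_iff_of_goesUp_iff (hP : IsOutsideDecomposition D P)
    (hP' : IsOutsideDecomposition D P') (h : ∀ x ∈ D, GoesUp D P x ↔ GoesUp D P' x)
    {y z : Box} (hy : y ∈ D) (hz : z ∈ D) (hyz : boxAdj y z) :
    SameStrip P y z ↔ SameStrip P' y z := by
  have hR (x : Box) (hx : x ∈ D) (hxR : (x.1, x.2 + 1) ∈ D) :
      SameStrip P x (x.1, x.2 + 1) ↔ SameStrip P' x (x.1, x.2 + 1) := by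
    rw [hP.sameStrip_right_iff hxR, hP'.sameStrip_right_iff hxR,
      hP.goesRight_iff_not_goesUp hx, hP'.goesRight_iff_not_goesUp hx, h x hx]
  have hA (x : Box) (hx : x ∈ D) (hxA : (x.1 - 1, x.2) ∈ D) :
      SameStrip P x (x.1 - 1, x.2) ↔ SameStrip P' x (x.1 - 1, x.2) := by
    rw [sameStrip_above_iff hxA, sameStrip_above_iff hxA, h x hx]
  have comm {Q : Set (Set Box)} : SameStrip Q y z ↔ SameStrip Q z y := ⟨.symm, .symm⟩
  rcases hyz with ⟨h1, h2 | h2⟩ | ⟨h1, h2 | h2⟩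
  · obtain rfl : y = (z.1, z.2 + 1) := Prod.ext h1 h2
    rw [comm, comm (Q := P')]; exact hR z hz hy
  · obtain rfl : z = (y.1, y.2 + 1) := Prod.ext h1.symm h2
    exact hR y hy hz
  · obtain rfl : z = (y.1 - 1, y.2) := Prod.ext (by simp; omega) h1.symm
    exact hA y hy hz
  · obtain rfl : y = (z.1 - 1, z.2) := Prod.ext (by simp; omega) h1
    rw [comm, comm (Q := P')]; exact hA z hz hy

lemma subset_of_goesUp_iff (hP : IsOutsideDecomposition D P)
    (hP' : IsOutsideDecomposition D P') (h : ∀ x ∈ D, GoesUp D P x ↔ GoesUp D P' x)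
    {θ θ' : Set Box} (hθ : θ ∈ P) (hθ' : θ' ∈ P') {b : Box} (hb : b ∈ θ) (hb' : b ∈ θ') :
    θ ⊆ θ' := by
  have hsub := (hP.1 θ hθ).2
  intro x hx
  induction (hP.1 θ hθ).1.2.2.1 b hb x hx with
  | refl => exact hb'
  | @tail y z _ hyz ih =>
    obtain ⟨θ'', hθ'', hy'', hz''⟩ := (hP.sameStrip_iff_of_goesUp_iff hP' h (hsub hyz.1)
      (hsub hyz.2.1) hyz.2.2).1 ⟨θ, hθ, hyz.1, hyz.2.1⟩
    exact hP'.eq_of_mem hθ'' hθ' hy'' (ih hyz.1) ▸ hz''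

/-- An outside decomposition is determined by which boxes go up: strips are edgewise
connected, and two adjacent boxes lie in the same strip exactly when the lower or left one
goes towards the other. -/
lemma eq_of_goesUp_iff (hP : IsOutsideDecomposition D P) (hP' : IsOutsideDecomposition D P')
    (h : ∀ x ∈ D, GoesUp D P x ↔ GoesUp D P' x) : P = P' := by
  have key {Q Q' : Set (Set Box)} (hQ : IsOutsideDecomposition D Q)
      (hQ' : IsOutsideDecomposition D Q') (h : ∀ x ∈ D, GoesUp D Q x ↔ GoesUp D Q' x) :
      Q ⊆ Q' := by
    intro θ hθ
    obtain ⟨b, hb⟩ := (hQ.1 θ hθ).1.1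
    obtain ⟨θ', ⟨hθ', hb'⟩, -⟩ := hQ'.2.1 b ((hQ.1 θ hθ).2 hb)
    have : θ = θ' := subset_antisymm (hQ.subset_of_goesUp_iff hQ' h hθ hθ' hb hb')
      (hQ'.subset_of_goesUp_iff hQ (fun x hx => (h x hx).symm) hθ' hθ hb' hb)
    exact this ▸ hθ'
  exact subset_antisymm (key hP hP' h) (key hP' hP fun x hx => (h x hx).symm)

end IsOutsideDecomposition

section CuttingStrip

variable {D : Set Box} {P P' : Set (Set Box)} {T T' : Set Box}

lemma IsCuttingStripOf.stripGoesUpAt_iff (hP : IsOutsideDecomposition D P)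
    (hT : IsCuttingStripOf D P T) {x : Box} (hx : x ∈ D)
    (hx1 : boxContent x + 1 ∈ boxContent '' D) :
    StripGoesUpAt T (boxContent x) ↔ GoesUp D P x := by
  refine ⟨fun ⟨b, hbT, hbx, habove⟩ => (hT.2.2 b hbT x hx hbx.symm).1 habove, fun hup => ?_⟩
  obtain ⟨b, hbT, hbx⟩ : boxContent x ∈ boxContent '' T := hT.2.1 ▸ ⟨x, hx, rfl⟩
  obtain ⟨y, hyT, hyx⟩ : boxContent x + 1 ∈ boxContent '' T := hT.2.1 ▸ hx1
  rcases hT.1.eq_above_or_eq_right hbT hyT (by rw [hyx, hbx]) with rfl | rfl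
  · exact ⟨b, hbT, hbx, hyT⟩
  · exact absurd hup ((hP.goesRight_iff_not_goesUp hx).1 ((hT.2.2 b hbT x hx hbx.symm).2 hyT))

lemma IsCuttingStripOf.goesUp_iff (hP : IsOutsideDecomposition D P)
    (hT : IsCuttingStripOf D P T) {x : Box} (hx : x ∈ D) :
    GoesUp D P x ↔ (boxContent x + 1 ∈ boxContent '' D → StripGoesUpAt T (boxContent x)) := by
  by_cases hx1 : boxContent x + 1 ∈ boxContent '' D
  · simp only [hx1, forall_const, hT.stripGoesUpAt_iff hP hx hx1]
  · simp only [hx1, false_imp_iff, iff_true]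
    exact hP.goesUp_of_boxContent_succ_not_mem hx hx1

lemma IsOutsideDecomposition.isCuttingStripOf_ribbon (hP : IsOutsideDecomposition D P)
    (hconv : D.OrdConnected) {s : Box} (hs : s ∈ D) {d : ℕ}
    (hcont : boxContent '' D = Set.Icc (boxContent s) (boxContent s + d - 1)) :
    IsCuttingStripOf D P (ribbon (fun i => ∀ c ∈ D, boxContent c = i → GoesUp D P c) s d) := by
  have hd : d ≠ 0 := by
    have := hcont ▸ Set.mem_image_of_mem boxContent hs
    simp only [Set.mem_Icc] at this
    omega
  refine ⟨isBorderStrip_ribbon _ s d hd, by rw [image_boxContent_ribbon, hcont], ?_⟩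
  intro b hb c hc hcb
  refine ⟨fun habove => ?_, fun hright => ?_⟩
  · have := nextBox_eq_above_iff.1 (nextBox_eq_of_mem_ribbon hb habove
      (by simp only [boxContent]; ring))
    exact this c hc hcb
  · have hnu := nextBox_eq_right_iff.1 (nextBox_eq_of_mem_ribbon hb hright
      (by simp only [boxContent]; ring))
    push Not at hnu
    obtain ⟨c₀, hc₀, hc₀b, hnup⟩ := hnu
    rw [hP.goesRight_iff_not_goesUp hc, hP.goesUp_iff_of_boxContent_eq hconv hc hc₀
      (hcb.trans hc₀b.symm)]
    exact hnup

lemma IsCuttingStripOf.exists_eq_boxTranslate (hP : IsOutsideDecomposition D P)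
    (hT : IsCuttingStripOf D P T) (hT' : IsCuttingStripOf D P T') {p : ℤ} {d : ℕ}
    (hcont : boxContent '' D = Set.Icc p (p + d - 1)) (hd : d ≠ 0) :
    ∃ v : Box, T' = boxTranslate v T := by
  have hp : p ∈ boxContent '' D := hcont ▸ ⟨le_rfl, by omega⟩
  obtain ⟨s, hs, rfl⟩ : p ∈ boxContent '' T := hT.2.1 ▸ hp
  obtain ⟨s', hs', hss'⟩ : boxContent s ∈ boxContent '' T' := hT'.2.1 ▸ hp
  refine ⟨s' - s, ?_⟩
  rw [hT.1.eq_ribbon hs (hT.2.1.trans hcont), hT'.1.eq_ribbon hs' (by rw [hT'.2.1, hcont, hss'])]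
  refine ribbon_eq_boxTranslate hss' fun i hi1 hi2 => ?_
  obtain ⟨x, hx, rfl⟩ : i ∈ boxContent '' D := hcont ▸ ⟨hi1, by omega⟩
  have hx1 : boxContent x + 1 ∈ boxContent '' D := hcont ▸ ⟨by omega, by omega⟩
  rw [hT.stripGoesUpAt_iff hP hx hx1, hT'.stripGoesUpAt_iff hP hx hx1]

lemma IsCuttingStripOf.eq_of_boxTranslate (hP : IsOutsideDecomposition D P)
    (hP' : IsOutsideDecomposition D P') (hT : IsCuttingStripOf D P T) {v : Box}
    (hT' : IsCuttingStripOf D P' (boxTranslate v T)) {p q : ℤ} (hpq : p ≤ q)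
    (hcont : boxContent '' D = Set.Icc p q) : P = P' := by
  have hv : boxContent v = 0 := by
    have h := hT'.2.1
    rw [image_boxContent_boxTranslate, hT.2.1, hcont, Set.image_add_const_Icc,
      Set.ext_iff] at h
    have h1 := (h p).2; have h2 := (h (p + boxContent v)).1
    simp only [Set.mem_Icc] at h1 h2
    have := h1 ⟨by omega, by omega⟩
    have := h2 ⟨by omega, by omega⟩
    omega
  refine hP.eq_of_goesUp_iff hP' fun x hx => ?_
  rw [hT.goesUp_iff hP hx, hT'.goesUp_iff hP' hx, stripGoesUpAt_boxTranslate, hv, sub_zero]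

end CuttingStrip

def maximalRibbons (u : ℤ → Prop) (D : Set Box) : Set (Set Box) :=
  {θ | ∃ s m, m ≠ 0 ∧ θ = ribbon u s m ∧ θ ⊆ D ∧ prevBox u s ∉ D ∧ (nextBox u)^[m] s ∉ D}

namespace maximalRibbons

variable {u : ℤ → Prop} {D : Set Box}

lemma exists_mem (hfin : D.Finite) {b : Box} (hb : b ∈ D) :
    ∃ θ ∈ maximalRibbons u D, b ∈ θ := by
  classical
  set S := {x ∈ D | ∃ k, (nextBox u)^[k] x = b ∧ ∀ j ≤ k, (nextBox u)^[j] x ∈ D}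
  have hbS : b ∈ S := ⟨hb, 0, rfl, fun j hj => by rwa [Nat.le_zero.1 hj]⟩
  obtain ⟨s, ⟨hsD, k, hkb, hk⟩, hmin⟩ :=
    Set.exists_min_image S boxContent (hfin.subset fun x hx => hx.1) ⟨b, hbS⟩
  have hprev : prevBox u s ∉ D := by
    intro hpD
    have hpS : prevBox u s ∈ S := by
      refine ⟨hpD, k + 1, by rw [Function.iterate_succ_apply, nextBox_prevBox, hkb], ?_⟩
      rintro (_ | j) hj
      · exact hpD
      · rw [Function.iterate_succ_apply, nextBox_prevBox]; exact hk j (by omega)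
    have := hmin _ hpS
    have hc := boxContent_nextBox u (prevBox u s)
    rw [nextBox_prevBox] at hc
    omega
  have hexit : ∃ n, (nextBox u)^[n] s ∉ D := by
    by_contra! h
    exact Set.infinite_of_injective_forall_mem (iterate_nextBox_injective u s) h hfin
  have hkm : k < Nat.find hexit := by
    by_contra! h
    exact Nat.find_spec hexit (hk _ h)
  refine ⟨ribbon u s (Nat.find hexit), ⟨s, _, by omega, rfl, ?_, hprev, Nat.find_spec hexit⟩,
    hkb ▸ iterate_nextBox_mem_ribbon hkm⟩
  rintro _ ⟨j, hj, rfl⟩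
  exact not_not.1 (Nat.find_min hexit hj)

lemma eq_start_of_iterate_eq {s s' : Box} {m j j' : ℕ} (hsub : ribbon u s m ⊆ D)
    (hprev' : prevBox u s' ∉ D) (hj : j < m) (hjj' : j' ≤ j)
    (h : (nextBox u)^[j] s = (nextBox u)^[j'] s') : s' = s := by
  obtain ⟨n, rfl⟩ := Nat.exists_eq_add_of_le hjj'
  rw [Function.iterate_add_apply] at h
  obtain rfl := ((nextBox_injective u).iterate j').eq_iff.1 h
  cases n with
  | zero => rfl
  | succ n =>
    rw [Function.iterate_succ_apply', prevBox_nextBox] at hprev'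
    exact absurd (hsub (iterate_nextBox_mem_ribbon (by omega))) hprev'

lemma eq_of_mem {θ θ' : Set Box} (hθ : θ ∈ maximalRibbons u D) (hθ' : θ' ∈ maximalRibbons u D)
    {b : Box} (hb : b ∈ θ) (hb' : b ∈ θ') : θ = θ' := by
  obtain ⟨s, m, -, rfl, hsub, hprev, hm⟩ := hθ
  obtain ⟨s', m', -, rfl, hsub', hprev', hm'⟩ := hθ'
  obtain ⟨j, hj, rfl⟩ := mem_ribbon.1 hb
  obtain ⟨j', hj', h⟩ := mem_ribbon.1 hb'
  obtain rfl : s' = s := by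
    rcases le_total j' j with hle | hle
    · exact eq_start_of_iterate_eq hsub hprev' hj hle h.symm
    · exact (eq_start_of_iterate_eq hsub' hprev hj' hle h).symm
  obtain rfl : m = m' := by
    by_contra hne
    rcases lt_or_gt_of_ne hne with hlt | hlt
    · exact hm (hsub' (iterate_nextBox_mem_ribbon hlt))
    · exact hm' (hsub (iterate_nextBox_mem_ribbon hlt))
  rfl

lemma isOutsideDecomposition (hfin : D.Finite) :
    IsOutsideDecomposition D (maximalRibbons u D) := by
  refine ⟨?_, fun b hb => ?_, ?_, ?_⟩
  · rintro _ ⟨s, m, hm, rfl, hsub, -⟩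
    exact ⟨isBorderStrip_ribbon u s m hm, hsub⟩
  · obtain ⟨θ, hθ, hbθ⟩ := exists_mem hfin hb
    exact ⟨θ, ⟨hθ, hbθ⟩, fun θ' ⟨hθ', hbθ'⟩ => eq_of_mem hθ' hθ hbθ' hbθ⟩
  · rintro _ ⟨s, m, -, rfl, -, hprev, -⟩ x hx
    obtain rfl := eq_of_isStartBox_ribbon hx
    rcases prevBox_cases u x with h | h <;> rw [h] at hprev
    · exact .inr hprev
    · exact .inl hprev
  · rintro _ ⟨s, m, hm, rfl, -, -, hnext⟩ x hx
    obtain rfl := eq_of_isEndBox_ribbon hx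
    rw [← Nat.succ_pred_eq_of_ne_zero hm, Function.iterate_succ_apply'] at hnext
    rcases nextBox_cases u ((nextBox u)^[m.pred] s) with h | h <;> rw [h] at hnext
    · exact .inl hnext
    · exact .inr hnext

lemma nextBox_mem_or_isEndBox {θ : Set Box} (hθ : θ ∈ maximalRibbons u D) {c : Box}
    (hc : c ∈ θ) : nextBox u c ∈ θ ∨ (IsEndBox θ c ∧ nextBox u c ∉ D) := by
  obtain ⟨s, m, -, rfl, -, -, hnext⟩ := hθ
  obtain ⟨k, hk, rfl⟩ := mem_ribbon.1 hc
  rw [← Function.iterate_succ_apply' (nextBox u)]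
  rcases (show k + 1 < m ∨ k + 1 = m by omega) with hk1 | rfl
  · exact .inl (iterate_nextBox_mem_ribbon hk1)
  refine .inr ⟨⟨hc, fun h => ?_, fun h => ?_⟩, hnext⟩ <;>
  · have := (image_boxContent_ribbon u s (k + 1) ▸ Set.mem_image_of_mem boxContent h).2
    have hc := boxContent_iterate_nextBox u s k
    simp only [boxContent] at this hc
    push_cast at this
    omega

lemma goesUp (hfin : D.Finite) {c : Box} (hc : c ∈ D) (hu : u (boxContent c)) :
    GoesUp D (maximalRibbons u D) c := by
  obtain ⟨θ, hθ, hcθ⟩ := exists_mem (u := u) hfin hc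
  rw [GoesUp, ← nextBox_eq_above_iff.2 hu]
  exact ⟨θ, hθ, hcθ, nextBox_mem_or_isEndBox hθ hcθ⟩

lemma goesRight (hfin : D.Finite) {c : Box} (hc : c ∈ D) (hnu : ¬u (boxContent c))
    (hsucc : (c.1 - 1, c.2) ∈ D ∨ (c.1, c.2 + 1) ∈ D) : GoesRight D (maximalRibbons u D) c := by
  obtain ⟨θ, hθ, hcθ⟩ := exists_mem (u := u) hfin hc
  rw [← nextBox_eq_right_iff.2 hnu] at hsucc
  rw [GoesRight, ← nextBox_eq_right_iff.2 hnu]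
  refine ⟨θ, hθ, hcθ, (nextBox_mem_or_isEndBox hθ hcθ).imp_right fun ⟨hend, hnD⟩ => ?_⟩
  exact ⟨hend, hsucc.resolve_right hnD⟩

end maximalRibbons

lemma isCuttingStripOf_maximalRibbons {D T : Set Box} (hfin : D.Finite) (hconv : D.OrdConnected)
    (hT : IsBorderStrip T) (hcont : boxContent '' T = boxContent '' D) :
    IsCuttingStripOf D (maximalRibbons (StripGoesUpAt T) D) T := by
  refine ⟨hT, hcont, fun b hb c hc hcb => ⟨fun habove => ?_, fun hright => ?_⟩⟩
  · exact maximalRibbons.goesUp hfin hc (hcb ▸ ⟨b, hb, rfl, habove⟩)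
  · have hbc : boxContent (b.1, b.2 + 1) = boxContent c + 1 := by
      rw [hcb]; simp only [boxContent]; ring
    obtain ⟨e, he, hec⟩ : boxContent c + 1 ∈ boxContent '' D := hcont ▸ ⟨_, hright, hbc⟩
    refine maximalRibbons.goesRight hfin hc (fun ⟨b', hb', hb'c, habove⟩ => ?_)
      (hconv.above_mem_or_right_mem hc he hec)
    obtain rfl := hT.injOn_boxContent hb' hb (hb'c.trans hcb)
    have := hT.injOn_boxContent habove hright (by simp only [boxContent]; ring)
    simp only [Prod.mk.injEq] at this
    omega

/-- For an edgewise connected skew diagram `D` with `d` diagonals, the map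
sending an outside decomposition `Π` to its cutting strip `φ(Π)` is a bijection between
outside decompositions of `D` and border strips with `d` boxes, considered up to
translation: every outside decomposition has a cutting strip (with `d` boxes), unique up to
translation; outside decompositions with translation-equivalent cutting strips coincide; and
every border strip with `d` boxes is, up to translation, the cutting strip of some outside
decomposition. -/
theorem cuttingStrip_bijection
    (D : Set Box) (hD : IsSkewShape D) (hne : D.Nonempty) (hconn : EdgewiseConnected D)
    (d : ℕ) (hd : (boxContent '' D).ncard = d) :
    (∀ P : Set (Set Box), IsOutsideDecomposition D P →
        ∃ T : Set Box, IsCuttingStripOf D P T ∧ T.ncard = d) ∧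
    (∀ (P : Set (Set Box)) (T T' : Set Box), IsOutsideDecomposition D P →
        IsCuttingStripOf D P T → IsCuttingStripOf D P T' →
        ∃ v : Box, T' = boxTranslate v T) ∧
    (∀ (P P' : Set (Set Box)) (T T' : Set Box),
        IsOutsideDecomposition D P → IsOutsideDecomposition D P' →
        IsCuttingStripOf D P T → IsCuttingStripOf D P' T' →
        (∃ v : Box, T' = boxTranslate v T) → P = P') ∧
    (∀ T : Set Box, IsBorderStrip T → T.ncard = d →
        ∃ P : Set (Set Box), IsOutsideDecomposition D P ∧
          ∃ v : Box, IsCuttingStripOf D P (boxTranslate v T)) := by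
  have hfin := hD.finite
  have hconv := hD.ordConnected
  obtain ⟨p, hp⟩ := hconn.image_boxContent_eq_Icc hfin hne
  rw [hd] at hp
  have hd0 : d ≠ 0 := hd ▸ ((Set.ncard_pos (hfin.image _)).2 (hne.image _)).ne'
  obtain ⟨s, hs, rfl⟩ : p ∈ boxContent '' D := hp ▸ ⟨le_rfl, by omega⟩
  refine ⟨fun P hP => ⟨_, hP.isCuttingStripOf_ribbon hconv hs hp, ncard_ribbon _ _ _⟩,
    fun P T T' hP hT hT' => hT.exists_eq_boxTranslate hP hT' hp hd0,
    fun P P' T T' hP hP' hT hT' ⟨v, hv⟩ => hT.eq_of_boxTranslate hP hP' (hv ▸ hT') (by omega) hp,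
    fun T hT hTd => ?_⟩
  obtain ⟨a, ha⟩ := hT.2.2.1.image_boxContent_eq_Icc (Set.finite_of_ncard_ne_zero (hTd ▸ hd0)) hT.1
  rw [hT.injOn_boxContent.ncard_image, hTd] at ha
  refine ⟨_, maximalRibbons.isOutsideDecomposition hfin, (0, boxContent s - a),
    isCuttingStripOf_maximalRibbons hfin hconv (hT.translate _) ?_⟩
  rw [image_boxContent_boxTranslate, ha, Set.image_add_const_Icc, hp]
  simp only [boxContent]
  congr 1 <;> ring
end
end

section
/- Let Π be an outside decomposition of a skew diagram λ/μ. Then for every content c, either every box of the diagonal of content c of λ/μ goes up in Π, or every box of that diagonal goes right in Π. -/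
noncomputable section

section NestedAux

lemma isSkewShape_isSkewLike {D : Set Box} (h : IsSkewShape D) : IsSkewLike D := by
  refine ⟨0, ?_⟩
  have hD : boxTranslate 0 D = D := by
    ext x
    simp [boxTranslate]
  rwa [hD]

lemma mem_skewLike_iff {S : Set Box} {v : Box} {lam mu : Partition'}
    (heq : boxTranslate v S = skewCells lam mu) (b : Box) :
    b ∈ S ↔ b + v ∈ skewCells lam mu := by
  rw [← heq]
  constructor
  · exact fun hb => ⟨b, hb, rfl⟩
  · rintro ⟨b', hb', he⟩
    have hbb : b' = b := add_right_cancel he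
    rwa [hbb] at hb'

lemma skewlike_corner {S : Set Box} (hS : IsSkewLike S) {x y : Box}
    (hx : x ∈ S) (hy : y ∈ S) (h1 : y.1 = x.1 + 1) (h2 : y.2 = x.2 + 1) :
    ((x.1, y.2) : Box) ∈ S ∧ ((y.1, x.2) : Box) ∈ S := by
  obtain ⟨v, lam, mu, -, heq⟩ := hS
  obtain ⟨x1, x2⟩ := x
  obtain ⟨y1, y2⟩ := y
  obtain ⟨v1, v2⟩ := v
  replace h1 : y1 = x1 + 1 := h1
  replace h2 : y2 = x2 + 1 := h2
  subst h1
  subst h2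
  rw [mem_skewLike_iff heq] at hx hy
  simp only [Prod.mk_add_mk, skewCells, Set.mem_setOf_eq] at hx hy
  obtain ⟨hx1, hx2, hx3⟩ := hx
  obtain ⟨hy1, hy2, hy3⟩ := hy
  have htn : (x1 + 1 + v1).toNat = (x1 + v1).toNat + 1 := by omega
  rw [htn] at hy2 hy3
  have hA : lam.part ((x1 + v1).toNat + 1) ≤ lam.part (x1 + v1).toNat :=
    lam.antitone (Nat.le_succ _)
  have hB : mu.part ((x1 + v1).toNat + 1) ≤ mu.part (x1 + v1).toNat :=
    mu.antitone (Nat.le_succ _)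
  constructor
  · rw [mem_skewLike_iff heq]
    simp only [Prod.mk_add_mk, skewCells, Set.mem_setOf_eq]
    exact ⟨by omega, by omega, by omega⟩
  · rw [mem_skewLike_iff heq]
    simp only [Prod.mk_add_mk, skewCells, Set.mem_setOf_eq]
    rw [htn]
    exact ⟨by omega, by omega, by omega⟩

lemma skew_diag {D : Set Box} (hD : IsSkewShape D) {a d k : Box}
    (ha : a ∈ D) (hd : d ∈ D) (hc1 : boxContent a = boxContent d)
    (hc2 : boxContent k = boxContent a) (h1 : a.1 ≤ k.1) (h2 : k.1 ≤ d.1) : k ∈ D := by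
  obtain ⟨lam, mu, -, rfl⟩ := hD
  simp only [skewCells, Set.mem_setOf_eq] at ha hd ⊢
  obtain ⟨ha1, ha2, ha3⟩ := ha
  obtain ⟨hd1, hd2, hd3⟩ := hd
  unfold boxContent at hc1 hc2
  have hm1 : mu.part k.1.toNat ≤ mu.part a.1.toNat := mu.antitone (by omega)
  have hm2 : lam.part d.1.toNat ≤ lam.part k.1.toNat := lam.antitone (by omega)
  exact ⟨by omega, by omega, by omega⟩

lemma up_or_right {D : Set Box} {P : Set (Set Box)} (hP : IsOutsideDecomposition D P)
    {b : Box} (hb : b ∈ D) : GoesUp D P b ∨ GoesRight D P b := by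
  obtain ⟨θ, ⟨hθP, hbθ⟩, -⟩ := hP.2.1 b hb
  by_cases h1 : ((b.1 - 1, b.2) : Box) ∈ θ
  · exact Or.inl ⟨θ, hθP, hbθ, Or.inl h1⟩
  by_cases h2 : ((b.1, b.2 + 1) : Box) ∈ θ
  · exact Or.inr ⟨θ, hθP, hbθ, Or.inl h2⟩
  by_cases h3 : ((b.1 - 1, b.2) : Box) ∈ D
  · exact Or.inr ⟨θ, hθP, hbθ, Or.inr ⟨⟨hbθ, h1, h2⟩, h3⟩⟩
  · exact Or.inl ⟨θ, hθP, hbθ, Or.inr ⟨⟨hbθ, h1, h2⟩, h3⟩⟩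

lemma same_strip {D : Set Box} {P : Set (Set Box)} (hP : IsOutsideDecomposition D P)
    {b : Box} (hbD : b ∈ D) {θ θ' : Set Box}
    (h1 : θ ∈ P) (h2 : b ∈ θ) (h3 : θ' ∈ P) (h4 : b ∈ θ') : θ = θ' := by
  obtain ⟨θ0, -, huniq⟩ := hP.2.1 b hbD
  rw [huniq θ ⟨h1, h2⟩, huniq θ' ⟨h3, h4⟩]

lemma diag_step {D : Set Box} (hD : IsSkewShape D) {P : Set (Set Box)}
    (hP : IsOutsideDecomposition D P) {i j : ℤ}
    (ha : ((i, j) : Box) ∈ D) (hd : ((i + 1, j + 1) : Box) ∈ D) :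
    GoesUp D P (i, j) ↔ GoesUp D P (i + 1, j + 1) := by
  have hDL : IsSkewLike D := isSkewShape_isSkewLike hD
  obtain ⟨hb, he⟩ := skewlike_corner hDL ha hd rfl rfl
  have hbD : ((i, j + 1) : Box) ∈ D := hb
  have imp1 : GoesUp D P (i, j) → GoesRight D P (i + 1, j + 1) → False := by
    rintro ⟨θa, hθaP, haθ, hua⟩ ⟨θd, hθdP, hdθ, hrd⟩
    have hSa : IsSkewLike θa := (hP.1 θa hθaP).1.2.1
    have hSd : IsSkewLike θd := (hP.1 θd hθdP).1.2.1
    have hNa : NoTwoByTwo θa := (hP.1 θa hθaP).1.2.2.2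
    have hNd : NoTwoByTwo θd := (hP.1 θd hθdP).1.2.2.2
    have hbθa : ((i, j + 1) : Box) ∉ θa := by
      intro hmem
      rcases hua with h1 | ⟨hend, -⟩
      · have h1' : ((i - 1, j) : Box) ∈ θa := h1
        obtain ⟨hc1, hc2⟩ := skewlike_corner hSa h1' hmem
          (show (i : ℤ) = i - 1 + 1 by ring) (show (j : ℤ) + 1 = j + 1 from rfl)
        have e1 : ((i - 1 + 1, j) : Box) ∈ θa := by
          rw [show (i - 1 + 1 : ℤ) = i from by ring]; exact haθ
        have e2 : ((i - 1 + 1, j + 1) : Box) ∈ θa := by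
          rw [show (i - 1 + 1 : ℤ) = i from by ring]; exact hmem
        exact hNa (i - 1, j) ⟨h1', hc1, e1, e2⟩
      · exact hend.2.2 hmem
    have hbθd : ((i, j + 1) : Box) ∉ θd := by
      intro hmem
      rcases hrd with h1 | ⟨hend, -⟩
      · have h1' : ((i + 1, j + 1 + 1) : Box) ∈ θd := h1
        obtain ⟨hc1, hc2⟩ := skewlike_corner hSd hmem h1'
          (show (i : ℤ) + 1 = i + 1 from rfl) (show (j : ℤ) + 1 + 1 = j + 1 + 1 from rfl)
        exact hNd (i, j + 1) ⟨hmem, hc1, hdθ, h1'⟩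
      · apply hend.2.1
        show ((i + 1 - 1, j + 1) : Box) ∈ θd
        rw [show (i + 1 - 1 : ℤ) = i from by ring]
        exact hmem
    obtain ⟨θb, ⟨hθbP, hbθb⟩, -⟩ := hP.2.1 (i, j + 1) hbD
    have hns : ¬ IsStartBox θb (i, j + 1) := by
      intro hs
      rcases hP.2.2.1 θb hθbP _ hs with h | h
      · apply h
        show ((i, j + 1 - 1) : Box) ∈ D
        rw [show (j + 1 - 1 : ℤ) = j from by ring]
        exact ha
      · exact h hd
    have hor : ((i, j) : Box) ∈ θb ∨ ((i + 1, j + 1) : Box) ∈ θb := by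
      by_contra hcon
      push_neg at hcon
      apply hns
      refine ⟨hbθb, ?_, ?_⟩
      · show ((i, j + 1 - 1) : Box) ∉ θb
        rw [show (j + 1 - 1 : ℤ) = j from by ring]
        exact hcon.1
      · exact hcon.2
    rcases hor with h | h
    · have heq2 : θb = θa := same_strip hP ha hθbP h hθaP haθ
      exact hbθa (heq2 ▸ hbθb)
    · have heq2 : θb = θd := same_strip hP hd hθbP h hθdP hdθ
      exact hbθd (heq2 ▸ hbθb)
  have imp2 : GoesRight D P (i, j) → GoesUp D P (i + 1, j + 1) → False := by
    rintro ⟨θa, hθaP, haθ, hra⟩ ⟨θd, hθdP, hdθ, hud⟩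
    have hSd : IsSkewLike θd := (hP.1 θd hθdP).1.2.1
    have hNd : NoTwoByTwo θd := (hP.1 θd hθdP).1.2.2.2
    have hbθd : ((i, j + 1) : Box) ∈ θd := by
      rcases hud with h | ⟨-, hnotD⟩
      · have h' : ((i + 1 - 1, j + 1) : Box) ∈ θd := h
        rwa [show (i + 1 - 1 : ℤ) = i from by ring] at h'
      · exfalso
        apply hnotD
        show ((i + 1 - 1, j + 1) : Box) ∈ D
        rw [show (i + 1 - 1 : ℤ) = i from by ring]
        exact hbD
    rcases hra with h | ⟨hend, habove⟩
    · have heq2 : θa = θd := same_strip hP hbD hθaP h hθdP hbθd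
      rw [heq2] at haθ
      obtain ⟨hc1, hc2⟩ := skewlike_corner hSd haθ hdθ rfl rfl
      exact hNd (i, j) ⟨haθ, hc1, hc2, hdθ⟩
    · rcases hP.2.2.2 θa hθaP _ hend with h2 | h2
      · exact h2 habove
      · exact h2 hbD
  constructor
  · intro hu
    rcases up_or_right hP hd with h | h
    · exact h
    · exact (imp1 hu h).elim
  · intro hu
    rcases up_or_right hP ha with h | h
    · exact h
    · exact (imp2 h hu).elim

lemma diag_same {D : Set Box} (hD : IsSkewShape D) {P : Set (Set Box)}
    (hP : IsOutsideDecomposition D P) :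
    ∀ (n : ℕ) (a b : Box), a ∈ D → b ∈ D → boxContent a = boxContent b →
      b.1 = a.1 + n → (GoesUp D P a ↔ GoesUp D P b)
  | 0, a, b, ha, hb, hc, hn => by
      obtain ⟨a1, a2⟩ := a
      obtain ⟨b1, b2⟩ := b
      unfold boxContent at hc
      simp only at hc hn
      have h1 : b1 = a1 := by omega
      have h2 : b2 = a2 := by omega
      rw [h1, h2]
  | (n + 1), a, b, ha, hb, hc, hn => by
      have hmid : ((a.1 + 1, a.2 + 1) : Box) ∈ D := by
        refine skew_diag hD ha hb hc ?_ ?_ ?_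
        · show a.2 + 1 - (a.1 + 1) = boxContent a
          unfold boxContent
          ring
        · show a.1 ≤ a.1 + 1
          omega
        · show a.1 + 1 ≤ b.1
          omega
      have step : GoesUp D P (a.1, a.2) ↔ GoesUp D P (a.1 + 1, a.2 + 1) :=
        diag_step hD hP ha hmid
      have ih : GoesUp D P ((a.1 + 1, a.2 + 1) : Box) ↔ GoesUp D P b := by
        refine diag_same hD hP n (a.1 + 1, a.2 + 1) b hmid hb ?_ ?_
        · show a.2 + 1 - (a.1 + 1) = boxContent b
          unfold boxContent at hc ⊢
          omega
        · show b.1 = a.1 + 1 + (n : ℤ)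
          omega
      exact step.trans ih

lemma diag_all {D : Set Box} (hD : IsSkewShape D) {P : Set (Set Box)}
    (hP : IsOutsideDecomposition D P) {a b : Box} (ha : a ∈ D) (hb : b ∈ D)
    (hc : boxContent a = boxContent b) : GoesUp D P a ↔ GoesUp D P b := by
  rcases le_total a.1 b.1 with h | h
  · exact diag_same hD hP (b.1 - a.1).toNat a b ha hb hc (by omega)
  · exact (diag_same hD hP (a.1 - b.1).toNat b a hb ha hc.symm (by omega)).symm

end NestedAux

/-- **nested property.** In any outside decomposition of a skew diagram, for
every content `c`, either all boxes of the diagonal of content `c` go up, or all of them go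
right. -/
theorem nested_property
    (D : Set Box) (hD : IsSkewShape D)
    (P : Set (Set Box)) (hP : IsOutsideDecomposition D P) (c : ℤ) :
    (∀ b ∈ D, boxContent b = c → GoesUp D P b) ∨
    (∀ b ∈ D, boxContent b = c → GoesRight D P b) := by
  by_cases h : ∀ b ∈ D, boxContent b = c → GoesUp D P b
  · exact Or.inl h
  · push_neg at h
    obtain ⟨b0, hb0D, hb0c, hb0⟩ := h
    right
    intro b hbD hbc
    rcases up_or_right hP hbD with hu | hr
    · exact (hb0 ((diag_all hD hP hbD hb0D (by rw [hbc, hb0c])).mp hu)).elim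
    · exact hr
end
end

section
/- Let Π be an outside decomposition of a skew diagram λ/μ. Then the contents of the ending boxes of distinct strips of Π are pairwise distinct, and the contents of the starting boxes of distinct strips of Π are pairwise distinct. -/
noncomputable section

section AuxLemmas

private lemma boxeq {a b c d : ℤ} (h1 : a = c) (h2 : b = d) : ((a, b) : Box) = (c, d) := by
  subst h1; subst h2; rfl

private lemma skew_closure {D : Set Box} (hD : IsSkewShape D) {i j : ℤ}
    (h1 : ((i, j) : Box) ∈ D) (h2 : ((i + 1, j + 1) : Box) ∈ D) :
    ((i, j + 1) : Box) ∈ D ∧ ((i + 1, j) : Box) ∈ D := by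
  obtain ⟨lam, mu, -, rfl⟩ := hD
  simp only [skewCells, Set.mem_setOf_eq] at h1 h2 ⊢
  obtain ⟨hi1, hmu1, hlam1⟩ := h1
  obtain ⟨hi2, hmu2, hlam2⟩ := h2
  have hl := lam.antitone (show i.toNat ≤ (i + 1).toNat by omega)
  have hm := mu.antitone (show i.toNat ≤ (i + 1).toNat by omega)
  exact ⟨⟨by omega, by omega, by omega⟩, ⟨by omega, by omega, by omega⟩⟩

private lemma skew_upright {D : Set Box} (hD : IsSkewShape D) {i j : ℤ}
    (h0 : ((i, j) : Box) ∈ D) (hu : ((i - 1, j) : Box) ∈ D)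
    (hr : ((i, j + 1) : Box) ∈ D) : ((i - 1, j + 1) : Box) ∈ D := by
  obtain ⟨lam, mu, -, rfl⟩ := hD
  simp only [skewCells, Set.mem_setOf_eq] at h0 hu hr ⊢
  have hl := lam.antitone (show (i - 1).toNat ≤ i.toNat by omega)
  exact ⟨by omega, by omega, by omega⟩

private lemma skew_downleft {D : Set Box} (hD : IsSkewShape D) {i j : ℤ}
    (h0 : ((i, j) : Box) ∈ D) (hl : ((i, j - 1) : Box) ∈ D)
    (hd : ((i + 1, j) : Box) ∈ D) : ((i + 1, j - 1) : Box) ∈ D := by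
  obtain ⟨lam, mu, -, rfl⟩ := hD
  simp only [skewCells, Set.mem_setOf_eq] at h0 hl hd ⊢
  have hm := mu.antitone (show i.toNat ≤ (i + 1).toNat by omega)
  exact ⟨by omega, by omega, by omega⟩

private lemma skew_diag_s4 {D : Set Box} (hD : IsSkewShape D) {x y : Box}
    (hx : x ∈ D) (hy : y ∈ D) (hc : x.2 - x.1 = y.2 - y.1) {i : ℤ}
    (h1 : x.1 ≤ i) (h2 : i ≤ y.1) : ((i, i + (x.2 - x.1)) : Box) ∈ D := by
  obtain ⟨lam, mu, -, rfl⟩ := hD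
  simp only [skewCells, Set.mem_setOf_eq] at hx hy ⊢
  obtain ⟨hx1, hx2, hx3⟩ := hx
  obtain ⟨hy1, hy2, hy3⟩ := hy
  refine ⟨by omega, ?_, ?_⟩
  · have := mu.antitone (show x.1.toNat ≤ i.toNat by omega)
    omega
  · have := lam.antitone (show i.toNat ≤ y.1.toNat by omega)
    omega

private lemma skewlike_mem {B : Set Box} {v x : Box} :
    x + v ∈ boxTranslate v B ↔ x ∈ B := by
  constructor
  · rintro ⟨y, hy, hxy⟩
    rwa [← add_right_cancel hxy]
  · intro h
    exact ⟨x, h, rfl⟩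

private lemma skewlike_upright {B : Set Box} (hB : IsSkewLike B) {i j : ℤ}
    (h0 : ((i, j) : Box) ∈ B) (hu : ((i - 1, j) : Box) ∈ B)
    (hr : ((i, j + 1) : Box) ∈ B) : ((i - 1, j + 1) : Box) ∈ B := by
  obtain ⟨v, hv⟩ := hB
  have m0 : ((i + v.1, j + v.2) : Box) ∈ boxTranslate v B := skewlike_mem.mpr h0
  have mu' : ((i + v.1 - 1, j + v.2) : Box) ∈ boxTranslate v B := by
    have h := (skewlike_mem (v := v)).mpr hu
    have e0 : ((i - 1, j) : Box) + v = (i - 1 + v.1, j + v.2) := rfl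
    rw [e0] at h
    have e : ((i + v.1 - 1, j + v.2) : Box) = (i - 1 + v.1, j + v.2) := boxeq (by omega) (by omega)
    rw [e]; exact h
  have mr' : ((i + v.1, j + v.2 + 1) : Box) ∈ boxTranslate v B := by
    have h := (skewlike_mem (v := v)).mpr hr
    have e0 : ((i, j + 1) : Box) + v = (i + v.1, j + 1 + v.2) := rfl
    rw [e0] at h
    have e : ((i + v.1, j + v.2 + 1) : Box) = (i + v.1, j + 1 + v.2) := boxeq (by omega) (by omega)
    rw [e]; exact h
  have key := skew_upright hv m0 mu' mr'
  have e2 : ((i + v.1 - 1, j + v.2 + 1) : Box) = ((i - 1, j + 1) : Box) + v := by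
    have e0 : ((i - 1, j + 1) : Box) + v = (i - 1 + v.1, j + 1 + v.2) := rfl
    rw [e0]; simp only [Prod.mk.injEq]; omega
  rw [e2] at key
  exact skewlike_mem.mp key

private lemma skewlike_downleft {B : Set Box} (hB : IsSkewLike B) {i j : ℤ}
    (h0 : ((i, j) : Box) ∈ B) (hl : ((i, j - 1) : Box) ∈ B)
    (hd : ((i + 1, j) : Box) ∈ B) : ((i + 1, j - 1) : Box) ∈ B := by
  obtain ⟨v, hv⟩ := hB
  have m0 : ((i + v.1, j + v.2) : Box) ∈ boxTranslate v B := skewlike_mem.mpr h0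
  have ml' : ((i + v.1, j + v.2 - 1) : Box) ∈ boxTranslate v B := by
    have h := (skewlike_mem (v := v)).mpr hl
    have e0 : ((i, j - 1) : Box) + v = (i + v.1, j - 1 + v.2) := rfl
    rw [e0] at h
    have e : ((i + v.1, j + v.2 - 1) : Box) = (i + v.1, j - 1 + v.2) := boxeq (by omega) (by omega)
    rw [e]; exact h
  have md' : ((i + v.1 + 1, j + v.2) : Box) ∈ boxTranslate v B := by
    have h := (skewlike_mem (v := v)).mpr hd
    have e0 : ((i + 1, j) : Box) + v = (i + 1 + v.1, j + v.2) := rfl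
    rw [e0] at h
    have e : ((i + v.1 + 1, j + v.2) : Box) = (i + 1 + v.1, j + v.2) := boxeq (by omega) (by omega)
    rw [e]; exact h
  have key := skew_downleft hv m0 ml' md'
  have e2 : ((i + v.1 + 1, j + v.2 - 1) : Box) = ((i + 1, j - 1) : Box) + v := by
    have e0 : ((i + 1, j - 1) : Box) + v = (i + 1 + v.1, j - 1 + v.2) := rfl
    rw [e0]; simp only [Prod.mk.injEq]; omega
  rw [e2] at key
  exact skewlike_mem.mp key

private lemma strip_no_branch_ur {B : Set Box} (hB : IsBorderStrip B) {i j : ℤ}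
    (h0 : ((i, j) : Box) ∈ B) (hu : ((i - 1, j) : Box) ∈ B)
    (hr : ((i, j + 1) : Box) ∈ B) : False := by
  obtain ⟨-, hsk, -, h22⟩ := hB
  have hur : ((i - 1, j + 1) : Box) ∈ B := skewlike_upright hsk h0 hu hr
  refine h22 (i - 1, j) ⟨hu, hur, ?_, ?_⟩
  · show ((i - 1 + 1, j) : Box) ∈ B
    rw [show ((i - 1 + 1, j) : Box) = (i, j) from boxeq (by omega) (by omega)]
    exact h0
  · show ((i - 1 + 1, j + 1) : Box) ∈ B
    rw [show ((i - 1 + 1, j + 1) : Box) = (i, j + 1) from boxeq (by omega) (by omega)]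
    exact hr

private lemma strip_no_branch_ld {B : Set Box} (hB : IsBorderStrip B) {i j : ℤ}
    (h0 : ((i, j) : Box) ∈ B) (hl : ((i, j - 1) : Box) ∈ B)
    (hd : ((i + 1, j) : Box) ∈ B) : False := by
  obtain ⟨-, hsk, -, h22⟩ := hB
  have hdl : ((i + 1, j - 1) : Box) ∈ B := skewlike_downleft hsk h0 hl hd
  refine h22 (i, j - 1) ⟨hl, ?_, hdl, ?_⟩
  · show ((i, j - 1 + 1) : Box) ∈ B
    rw [show ((i, j - 1 + 1) : Box) = (i, j) from boxeq (by omega) (by omega)]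
    exact h0
  · show ((i + 1, j - 1 + 1) : Box) ∈ B
    rw [show ((i + 1, j - 1 + 1) : Box) = (i + 1, j) from boxeq (by omega) (by omega)]
    exact hd

end AuxLemmas


section MainLemmas

private lemma step_end {D : Set Box} {P : Set (Set Box)}
    (hD : IsSkewShape D) (hP : IsOutsideDecomposition D P) {i j : ℤ}
    (hu : ((i, j) : Box) ∈ D) (hd : ((i + 1, j + 1) : Box) ∈ D)
    (H : ∀ τ ∈ P, ((i, j) : Box) ∈ τ → ((i, j + 1) : Box) ∉ τ) :
    ∃ τ ∈ P, ((i + 1, j + 1) : Box) ∈ τ ∧ ((i, j + 1) : Box) ∈ τ := by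
  have hr : ((i, j + 1) : Box) ∈ D := (skew_closure hD hu hd).1
  obtain ⟨τ, ⟨hτP, hrτ⟩, -⟩ := hP.2.1 _ hr
  by_cases hdown : ((i + 1, j + 1) : Box) ∈ τ
  · exact ⟨τ, hτP, hdown, hrτ⟩
  by_cases hleft : ((i, j) : Box) ∈ τ
  · exact absurd hrτ (H τ hτP hleft)
  · have hsb : IsStartBox τ (i, j + 1) := by
      refine ⟨hrτ, ?_, ?_⟩
      · show ((i, j + 1 - 1) : Box) ∉ τ
        rw [show ((i, j + 1 - 1) : Box) = (i, j) from boxeq rfl (by omega)]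
        exact hleft
      · exact hdown
    rcases hP.2.2.1 τ hτP _ hsb with h | h
    · refine absurd ?_ h
      show ((i, j + 1 - 1) : Box) ∈ D
      rw [show ((i, j + 1 - 1) : Box) = (i, j) from boxeq rfl (by omega)]
      exact hu
    · exact absurd hd h

private lemma step_start {D : Set Box} {P : Set (Set Box)}
    (hD : IsSkewShape D) (hP : IsOutsideDecomposition D P) {i j : ℤ}
    (hu : ((i, j) : Box) ∈ D) (hd : ((i + 1, j + 1) : Box) ∈ D)
    (H : ∀ τ ∈ P, ((i + 1, j + 1) : Box) ∈ τ → ((i + 1, j) : Box) ∉ τ) :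
    ∃ τ ∈ P, ((i, j) : Box) ∈ τ ∧ ((i + 1, j) : Box) ∈ τ := by
  have hl : ((i + 1, j) : Box) ∈ D := (skew_closure hD hu hd).2
  obtain ⟨τ, ⟨hτP, hlτ⟩, -⟩ := hP.2.1 _ hl
  by_cases hup : ((i, j) : Box) ∈ τ
  · exact ⟨τ, hτP, hup, hlτ⟩
  by_cases hright : ((i + 1, j + 1) : Box) ∈ τ
  · exact absurd hlτ (H τ hτP hright)
  · have heb : IsEndBox τ (i + 1, j) := by
      refine ⟨hlτ, ?_, hright⟩
      show ((i + 1 - 1, j) : Box) ∉ τ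
      rw [show ((i + 1 - 1, j) : Box) = (i, j) from boxeq (by omega) rfl]
      exact hup
    rcases hP.2.2.2 τ hτP _ heb with h | h
    · refine absurd ?_ h
      show ((i + 1 - 1, j) : Box) ∈ D
      rw [show ((i + 1 - 1, j) : Box) = (i, j) from boxeq (by omega) rfl]
      exact hu
    · exact absurd hd h

private lemma end_case {D : Set Box} (hD : IsSkewShape D) {P : Set (Set Box)}
    (hP : IsOutsideDecomposition D P) {θ θ' : Set Box} (hθ : θ ∈ P) (hθ' : θ' ∈ P)
    {b b' : Box} (hb : IsEndBox θ b) (hb' : IsEndBox θ' b')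
    (hc : boxContent b = boxContent b') (hlt : b'.1 < b.1) : False := by
  have hbD : b ∈ D := (hP.1 θ hθ).2 hb.1
  have hb'D : b' ∈ D := (hP.1 θ' hθ').2 hb'.1
  have hcc : b.2 - b.1 = b'.2 - b'.1 := hc
  have hmem : ∀ z : ℤ, 0 ≤ z → z ≤ b.1 - b'.1 → ((b'.1 + z, b'.2 + z) : Box) ∈ D := by
    intro z h0 h1
    have h := skew_diag_s4 hD hb'D hbD hcc.symm (show b'.1 ≤ b'.1 + z by omega)
      (show b'.1 + z ≤ b.1 by omega)
    rwa [show ((b'.1 + z, b'.1 + z + (b'.2 - b'.1)) : Box) = (b'.1 + z, b'.2 + z) from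
      boxeq rfl (by omega)] at h
  have key : ∀ z : ℤ, 1 ≤ z → z ≤ b.1 - b'.1 →
      ∃ τ ∈ P, ((b'.1 + z, b'.2 + z) : Box) ∈ τ ∧ ((b'.1 + z - 1, b'.2 + z) : Box) ∈ τ := by
    refine Int.le_induction ?_ ?_
    · intro hle
      have H : ∀ τ ∈ P, ((b'.1, b'.2) : Box) ∈ τ → ((b'.1, b'.2 + 1) : Box) ∉ τ := by
        intro τ hτP hbτ
        have hτ : τ = θ' := (hP.2.1 b' hb'D).unique ⟨hτP, hbτ⟩ ⟨hθ', hb'.1⟩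
        rw [hτ]; exact hb'.2.2
      have hd1 : ((b'.1 + 1, b'.2 + 1) : Box) ∈ D := hmem 1 (by omega) (by omega)
      obtain ⟨τ, hτP, h1, h2⟩ := step_end hD hP (i := b'.1) (j := b'.2) hb'D hd1 H
      refine ⟨τ, hτP, h1, ?_⟩
      rw [show ((b'.1 + 1 - 1, b'.2 + 1) : Box) = (b'.1, b'.2 + 1) from boxeq (by omega) rfl]
      exact h2
    · intro n hn ih hle
      obtain ⟨σ, hσP, hx, ha⟩ := ih (by omega)
      have H : ∀ τ ∈ P, ((b'.1 + n, b'.2 + n) : Box) ∈ τ →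
          ((b'.1 + n, b'.2 + n + 1) : Box) ∉ τ := by
        intro τ hτP hmemx hmemr
        have hτσ : τ = σ :=
          (hP.2.1 _ (hmem n (by omega) (by omega))).unique ⟨hτP, hmemx⟩ ⟨hσP, hx⟩
        rw [hτσ] at hmemr
        exact strip_no_branch_ur (hP.1 σ hσP).1 (i := b'.1 + n) (j := b'.2 + n) hx ha hmemr
      have hdn : ((b'.1 + n + 1, b'.2 + n + 1) : Box) ∈ D := by
        have h := hmem (n + 1) (by omega) (by omega)
        rwa [show ((b'.1 + (n + 1), b'.2 + (n + 1)) : Box) = (b'.1 + n + 1, b'.2 + n + 1) from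
          boxeq (by omega) (by omega)] at h
      obtain ⟨τ, hτP, h1, h2⟩ := step_end hD hP (i := b'.1 + n) (j := b'.2 + n)
        (hmem n (by omega) (by omega)) hdn H
      refine ⟨τ, hτP, ?_, ?_⟩
      · rw [show ((b'.1 + (n + 1), b'.2 + (n + 1)) : Box) = (b'.1 + n + 1, b'.2 + n + 1) from
          boxeq (by omega) (by omega)]
        exact h1
      · rw [show ((b'.1 + (n + 1) - 1, b'.2 + (n + 1)) : Box) = (b'.1 + n, b'.2 + n + 1) from
          boxeq (by omega) (by omega)]
        exact h2
  obtain ⟨τ, hτP, h1, h2⟩ := key (b.1 - b'.1) (by omega) (by omega)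
  rw [show ((b'.1 + (b.1 - b'.1), b'.2 + (b.1 - b'.1)) : Box) = b from
    Prod.ext_iff.mpr ⟨by omega, by omega⟩] at h1
  rw [show ((b'.1 + (b.1 - b'.1) - 1, b'.2 + (b.1 - b'.1)) : Box) = (b.1 - 1, b.2) from
    boxeq (by omega) (by omega)] at h2
  have hτθ : τ = θ := (hP.2.1 b hbD).unique ⟨hτP, h1⟩ ⟨hθ, hb.1⟩
  rw [hτθ] at h2
  exact hb.2.1 h2

private lemma start_case {D : Set Box} (hD : IsSkewShape D) {P : Set (Set Box)}
    (hP : IsOutsideDecomposition D P) {θ θ' : Set Box} (hθ : θ ∈ P) (hθ' : θ' ∈ P)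
    {b b' : Box} (hb : IsStartBox θ b) (hb' : IsStartBox θ' b')
    (hc : boxContent b = boxContent b') (hlt : b'.1 < b.1) : False := by
  have hbD : b ∈ D := (hP.1 θ hθ).2 hb.1
  have hb'D : b' ∈ D := (hP.1 θ' hθ').2 hb'.1
  have hcc : b.2 - b.1 = b'.2 - b'.1 := hc
  have hmem : ∀ z : ℤ, 0 ≤ z → z ≤ b.1 - b'.1 → ((b.1 - z, b.2 - z) : Box) ∈ D := by
    intro z h0 h1
    have h := skew_diag_s4 hD hb'D hbD hcc.symm (show b'.1 ≤ b.1 - z by omega)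
      (show b.1 - z ≤ b.1 by omega)
    rwa [show ((b.1 - z, b.1 - z + (b'.2 - b'.1)) : Box) = (b.1 - z, b.2 - z) from
      boxeq rfl (by omega)] at h
  have key : ∀ z : ℤ, 1 ≤ z → z ≤ b.1 - b'.1 →
      ∃ τ ∈ P, ((b.1 - z, b.2 - z) : Box) ∈ τ ∧ ((b.1 - z + 1, b.2 - z) : Box) ∈ τ := by
    refine Int.le_induction ?_ ?_
    · intro hle
      have H : ∀ τ ∈ P, ((b.1 - 1 + 1, b.2 - 1 + 1) : Box) ∈ τ →
          ((b.1 - 1 + 1, b.2 - 1) : Box) ∉ τ := by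
        intro τ hτP hbτ
        rw [show ((b.1 - 1 + 1, b.2 - 1 + 1) : Box) = b from
          Prod.ext_iff.mpr ⟨by omega, by omega⟩] at hbτ
        have hτ : τ = θ := (hP.2.1 b hbD).unique ⟨hτP, hbτ⟩ ⟨hθ, hb.1⟩
        rw [hτ, show ((b.1 - 1 + 1, b.2 - 1) : Box) = (b.1, b.2 - 1) from
          boxeq (by omega) rfl]
        exact hb.2.1
      have hu1 : ((b.1 - 1, b.2 - 1) : Box) ∈ D := hmem 1 (by omega) (by omega)
      have hd1 : ((b.1 - 1 + 1, b.2 - 1 + 1) : Box) ∈ D := by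
        rw [show ((b.1 - 1 + 1, b.2 - 1 + 1) : Box) = b from
          Prod.ext_iff.mpr ⟨by omega, by omega⟩]
        exact hbD
      exact step_start hD hP (i := b.1 - 1) (j := b.2 - 1) hu1 hd1 H
    · intro n hn ih hle
      obtain ⟨σ, hσP, hy, hbl⟩ := ih (by omega)
      have H : ∀ τ ∈ P, ((b.1 - (n + 1) + 1, b.2 - (n + 1) + 1) : Box) ∈ τ →
          ((b.1 - (n + 1) + 1, b.2 - (n + 1)) : Box) ∉ τ := by
        intro τ hτP hmemy hmeml
        rw [show ((b.1 - (n + 1) + 1, b.2 - (n + 1) + 1) : Box) = (b.1 - n, b.2 - n) from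
          boxeq (by omega) (by omega)] at hmemy
        have hτσ : τ = σ :=
          (hP.2.1 _ (hmem n (by omega) (by omega))).unique ⟨hτP, hmemy⟩ ⟨hσP, hy⟩
        rw [hτσ, show ((b.1 - (n + 1) + 1, b.2 - (n + 1)) : Box) = (b.1 - n, b.2 - n - 1) from
          boxeq (by omega) (by omega)] at hmeml
        have hbl' : ((b.1 - n + 1, b.2 - n) : Box) ∈ σ := hbl
        exact strip_no_branch_ld (hP.1 σ hσP).1 (i := b.1 - n) (j := b.2 - n) hy hmeml hbl'
      have hun : ((b.1 - (n + 1), b.2 - (n + 1)) : Box) ∈ D := hmem (n + 1) (by omega) (by omega)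
      have hdn : ((b.1 - (n + 1) + 1, b.2 - (n + 1) + 1) : Box) ∈ D := by
        rw [show ((b.1 - (n + 1) + 1, b.2 - (n + 1) + 1) : Box) = (b.1 - n, b.2 - n) from
          boxeq (by omega) (by omega)]
        exact hmem n (by omega) (by omega)
      exact step_start hD hP (i := b.1 - (n + 1)) (j := b.2 - (n + 1)) hun hdn H
  obtain ⟨τ, hτP, h1, h2⟩ := key (b.1 - b'.1) (by omega) (by omega)
  rw [show ((b.1 - (b.1 - b'.1), b.2 - (b.1 - b'.1)) : Box) = b' from
    Prod.ext_iff.mpr ⟨by omega, by omega⟩] at h1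
  rw [show ((b.1 - (b.1 - b'.1) + 1, b.2 - (b.1 - b'.1)) : Box) = (b'.1 + 1, b'.2) from
    boxeq (by omega) (by omega)] at h2
  have hτθ : τ = θ' := (hP.2.1 b' hb'D).unique ⟨hτP, h1⟩ ⟨hθ', hb'.1⟩
  rw [hτθ] at h2
  exact hb'.2.2 h2

end MainLemmas


/-- In an outside decomposition, the contents of the ending boxes of
distinct strips are pairwise distinct, and likewise for starting boxes. -/
theorem contents_of_ends_distinct
    (D : Set Box) (hD : IsSkewShape D)
    (P : Set (Set Box)) (hP : IsOutsideDecomposition D P) :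
    (∀ θ ∈ P, ∀ θ' ∈ P, ∀ b b' : Box, IsEndBox θ b → IsEndBox θ' b' →
        boxContent b = boxContent b' → θ = θ') ∧
    (∀ θ ∈ P, ∀ θ' ∈ P, ∀ b b' : Box, IsStartBox θ b → IsStartBox θ' b' →
        boxContent b = boxContent b' → θ = θ') := by
  constructor
  · intro θ hθ θ' hθ' b b' h h' hc
    by_cases hbb : b = b'
    · subst hbb
      exact (hP.2.1 b ((hP.1 θ hθ).2 h.1)).unique ⟨hθ, h.1⟩ ⟨hθ', h'.1⟩
    · exfalso
      have hcc : b.2 - b.1 = b'.2 - b'.1 := hc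
      rcases lt_trichotomy b'.1 b.1 with hlt | heq | hlt
      · exact end_case hD hP hθ hθ' h h' hc hlt
      · exact hbb (Prod.ext_iff.mpr ⟨heq.symm, by omega⟩)
      · exact end_case hD hP hθ' hθ h' h hc.symm hlt
  · intro θ hθ θ' hθ' b b' h h' hc
    by_cases hbb : b = b'
    · subst hbb
      exact (hP.2.1 b ((hP.1 θ hθ).2 h.1)).unique ⟨hθ, h.1⟩ ⟨hθ', h'.1⟩
    · exfalso
      have hcc : b.2 - b.1 = b'.2 - b'.1 := hc
      rcases lt_trichotomy b'.1 b.1 with hlt | heq | hlt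
      · exact start_case hD hP hθ hθ' h h' hc hlt
      · exact hbb (Prod.ext_iff.mpr ⟨heq.symm, by omega⟩)
      · exact start_case hD hP hθ' hθ h' h hc.symm hlt
end
end
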